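/- arXiv:1802.06683 — 9 statements merged into one kernel-verified Lean document; each statement's English description precedes it below -/
import Mathlib

section
/- Let L ⊆ Σ* be a language, let m, k ∈ ℕ, and let R_{i,j} ⊆ Σ* for i ∈ [1,m], j ∈ [1,k] be languages such that L ⊆ ⋃_{i=1}^m R_{i,1}⋯R_{i,k} and R_{i,1} × ⋯ × R_{i,k} ⊆ F_k(L) for every i ∈ [1,m]. Set R = ⋃_{i=1}^m R_{i,1}⋯R_{i,k}. Then for every n ∈ ℕ and every n-dimensional unboundedness predicate p over Σ, p(F_n(L)) holds if and only if p(F_n(R)) holds. -/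
/-- Kleene star of a language, as a set of lists. -/
def LangStar {α : Type*} (K : Set (List α)) : Set (List α) :=
  {w | ∃ ws : List (List α), (∀ u ∈ ws, u ∈ K) ∧ w = ws.flatten}

/-- Concatenation of two languages. -/
def LangConc {α : Type*} (K L : Set (List α)) : Set (List α) :=
  {w | ∃ u ∈ K, ∃ v ∈ L, w = u ++ v}

/-- Concatenation `L 0 · L 1 ⋯ L (k-1)` of a finite family of languages. -/
def LangConcFn {α : Type*} {k : ℕ} (Ls : Fin k → Set (List α)) : Set (List α) :=
  {w | ∃ ws : Fin k → List α, (∀ j, ws j ∈ Ls j) ∧ w = (List.ofFn ws).flatten}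

/-- `w ^ x` : the `x`-fold repetition of the word `w`. -/
def wpow {α : Type*} (w : List α) (x : ℕ) : List α := (List.replicate x w).flatten

/-- The set of factors `F(L) = {w : L ∩ Σ*wΣ* ≠ ∅}`. -/
def Factors {α : Type*} (L : Set (List α)) : Set (List α) :=
  {w | ∃ u ∈ L, ∃ x y : List α, u = x ++ w ++ y}

/-- The set of factor tuples
`F_n(L) = {(w1,…,wn) : Σ*w1Σ*w2Σ*⋯wnΣ* ∩ L ≠ ∅}`. -/
def FactorTuples {α : Type*} (n : ℕ) (L : Set (List α)) : Set (Fin n → List α) :=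
  {w | ∃ u ∈ L, ∃ g : Fin (n + 1) → List α,
      u = (List.ofFn fun i : Fin n => g i.castSucc ++ w i).flatten ++ g (Fin.last n)}

/-- A language is bounded if `L ⊆ w1* ⋯ wn*` for some words `w1,…,wn`. -/
def IsBoundedLang {α : Type*} (L : Set (List α)) : Prop :=
  ∃ (n : ℕ) (ws : Fin n → List α), L ⊆ LangConcFn fun i => LangStar {ws i}

/-- A language is regular if it is accepted by a finite (deterministic) automaton. -/
def IsRegularLang {α : Type*} (L : Set (List α)) : Prop :=
  ∃ (σ : Type) (_ : Fintype σ) (M : DFA α σ), ∀ w, w ∈ M.accepts ↔ w ∈ L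

/-- `FireList T v ts v'` : firing the sequence `ts` of transitions (all from `T`)
leads from configuration `v` to `v'`, keeping all intermediate configurations
nonnegative (automatic, as configurations live in `Fin d → ℕ`). -/
def FireList {d : ℕ} (T : Set (Fin d → ℤ)) :
    (Fin d → ℕ) → List (Fin d → ℤ) → (Fin d → ℕ) → Prop
  | v, [], v' => v = v'
  | v, τ :: ts, v' => τ ∈ T ∧ ∃ u : Fin d → ℕ,
      (∀ i, (u i : ℤ) = (v i : ℤ) + τ i) ∧ FireList T u ts v'

/-- A labeled vector addition system over the alphabet `α`. -/
structure LVAS (α : Type*) where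
  d : ℕ
  T : Finset (Fin d → ℤ)
  s : Fin d → ℕ
  t : Fin d → ℕ
  /-- the labeling `h : T → Σ ∪ {ε}`, with `none` playing the role of `ε` -/
  lab : (Fin d → ℤ) → Option α

/-- The language of a labeled VAS: labels of firing sequences from source to target. -/
def LVAS.lang {α : Type*} (V : LVAS α) : Set (List α) :=
  {w | ∃ ts : List (Fin V.d → ℤ), FireList (↑V.T) V.s ts V.t ∧ ts.filterMap V.lab = w}

/-- A VAS language is the language of some labeled VAS. -/
def IsVASLang {α : Type*} (L : Set (List α)) : Prop := ∃ V : LVAS α, L = V.lang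

/-- Given a decomposition `n = ns 0 + ⋯ + ns (k-1)`, the index in `Fin n` of the
`i`-th position of the `j`-th block. -/
def blockIdx {k n : ℕ} (ns : Fin k → ℕ) (h : ∑ j, ns j = n) (j : Fin k)
    (i : Fin (ns j)) : Fin n :=
  ⟨(∑ j' ∈ Finset.univ.filter (fun j' => j' < j), ns j') + (i : ℕ), by
    have hj : j ∉ Finset.univ.filter (fun j' => j' < j) := by simp
    have h1 : ∑ j' ∈ insert j (Finset.univ.filter (fun j' => j' < j)), ns j'
        ≤ ∑ j', ns j' := Finset.sum_le_sum_of_subset (Finset.subset_univ _)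
    rw [Finset.sum_insert hj] at h1
    have h2 := i.isLt
    omega⟩

/-- The product set `F_{n1}(L1) × ⋯ × F_{nk}(Lk) ⊆ (Σ*)^n` for a decomposition
`n = n1 + ⋯ + nk`: those `n`-tuples whose `j`-th block belongs to `F_{nj}(Lj)`. -/
def ProdFT {α : Type*} {k n : ℕ} (ns : Fin k → ℕ) (Ls : Fin k → Set (List α))
    (h : ∑ j, ns j = n) : Set (Fin n → List α) :=
  {w | ∀ j : Fin k,
    (fun i : Fin (ns j) => w (blockIdx ns h j i)) ∈ FactorTuples (ns j) (Ls j)}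

/-- An `n`-dimensional unboundedness predicate. -/
def IsUnbPred {α : Type*} (n : ℕ) (p : Set (Fin n → List α) → Prop) : Prop :=
  (∀ S T : Set (Fin n → List α), p S → S ⊆ T → p T) ∧
  (∀ S T : Set (Fin n → List α), p (S ∪ T) → p S ∨ p T) ∧
  (∀ (k : ℕ) (Ls : Fin k → Set (List α)), p (FactorTuples n (LangConcFn Ls)) →
     ∃ (ns : Fin k → ℕ) (h : ∑ j, ns j = n), p (ProdFT ns Ls h))

/-- Downward closure of a set of `n`-tuples of words w.r.t. the (scattered) subword
ordering in each component. -/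
def dclT {α : Type*} {n : ℕ} (S : Set (Fin n → List α)) : Set (Fin n → List α) :=
  {u | ∃ v ∈ S, ∀ i, List.Sublist (u i) (v i)}

/-- `numF K w = |w|_K`, the largest `m` such that `m` non-overlapping factors from `K`
occur in `w` in order. -/
noncomputable def numF {α : Type*} (K : Set (List α)) (w : List α) : ℕ :=
  sSup {m | ∃ ws : Fin m → List α, (∀ i, ws i ∈ K) ∧ ws ∈ FactorTuples m {w}}

/-- `cWrap c L = cLc = {cuc : u ∈ L}`. -/
def cWrap {α : Type*} (c : α) (L : Set (List α)) : Set (List α) :=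
  {w | ∃ u ∈ L, w = c :: (u ++ [c])}

/-- `cSepStar c L = c(Lc)* = {c u1 c u2 c ⋯ um c : m ≥ 0, u1,…,um ∈ L}`. -/
def cSepStar {α : Type*} (c : α) (L : Set (List α)) : Set (List α) :=
  {w | ∃ us : List (List α), (∀ u ∈ us, u ∈ L) ∧
      w = c :: (us.map (fun u => u ++ [c])).flatten}

/-- A subset of `ℕ^n` is recognizable if it is saturated by an additive monoid
morphism into a finite monoid. -/
def IsRecognizable {n : ℕ} (U : Set (Fin n → ℕ)) : Prop :=
  ∃ (M : Type) (_ : AddMonoid M) (_ : Finite M) (φ : (Fin n → ℕ) →+ M),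
    U = φ ⁻¹' (φ '' U)

/-- `U ⊆ ℕ^n` is a section of a VAS reachability set. -/
def IsVASReachSection {n : ℕ} (U : Set (Fin n → ℕ)) : Prop :=
  ∃ (N : ℕ) (T : Finset (Fin N → ℤ)) (s : Fin N → ℕ) (I : Finset (Fin N))
    (x : Fin N → ℕ) (e : Fin n → Fin N),
    StrictMono e ∧ (∀ j, e j ∉ I) ∧ (∀ i, i ∉ I → ∃ j, e j = i) ∧
    U = {u | ∃ v : Fin N → ℕ, (∃ ts, FireList (↑T) s ts v) ∧
          (∀ i ∈ I, v i = x i) ∧ (∀ j, v (e j) = u j)}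

/-!
`p(F_n(L))` gives `p(F_n(R))` by monotonicity, since `L ⊆ R`. Conversely, `F_n(R)` is the
union of the `F_n(R_{i,1}⋯R_{i,k})`, so `p` holds for one of them (or for `∅`, and then for
everything). The decomposition property then yields `p(F_{n_1}(R_{i,1}) × ⋯ × F_{n_k}(R_{i,k}))`,
and this product lies in `F_n(L)`: picking a word of `R_{i,j}` around each block gives a tuple
in `R_{i,1} × ⋯ × R_{i,k} ⊆ F_k(L)`, and factors of factors, taken in order, are factors.
-/

/-- The inductive form of membership in `FactorTuples`: the words of `ws` occur in `u` as
non-overlapping factors, in order. -/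
def OrderedFactors {α : Type*} : List (List α) → List α → Prop
  | [], _ => True
  | w :: ws, u => ∃ x y : List α, u = x ++ w ++ y ∧ OrderedFactors ws y

namespace OrderedFactors

variable {α : Type*}

theorem append_left : ∀ {ws : List (List α)} {y : List α} (z : List α),
    OrderedFactors ws y → OrderedFactors ws (z ++ y)
  | [], _, _, _ => trivial
  | _ :: _, _, z, ⟨x, y', hy, h⟩ => ⟨z ++ x, y', by simp [hy], h⟩

theorem append : ∀ {as bs : List (List α)} {u y : List α} (x : List α),
    OrderedFactors as u → OrderedFactors bs y → OrderedFactors (as ++ bs) (x ++ u ++ y)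
  | [], _, u, _, x, _, hb => by
      rw [List.nil_append]
      exact hb.append_left (x ++ u)
  | _ :: _, _, _, y, x, ⟨xa, ya, hu, ha⟩, hb =>
      ⟨x ++ xa, ya ++ y, by simp [hu], by simpa using append [] ha hb⟩

theorem flatten_ofFn {k : ℕ} {wss : Fin k → List (List α)} {us : Fin k → List α}
    {v : List α} (hwss : ∀ j, OrderedFactors (wss j) (us j))
    (hus : OrderedFactors (List.ofFn us) v) : OrderedFactors (List.ofFn wss).flatten v := by
  induction k generalizing v with
  | zero => trivial
  | succ k ih =>
    rw [List.ofFn_succ] at hus ⊢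
    obtain ⟨x, y, rfl, hy⟩ := hus
    exact (hwss 0).append x (ih (fun j => hwss j.succ) hy)

end OrderedFactors

theorem orderedFactors_ofFn_interleave {α : Type*} {n : ℕ} (w : Fin n → List α)
    (g : Fin (n + 1) → List α) :
    OrderedFactors (List.ofFn w)
      ((List.ofFn fun i : Fin n => g i.castSucc ++ w i).flatten ++ g (Fin.last n)) := by
  induction n with
  | zero => trivial
  | succ n ih =>
    rw [List.ofFn_succ]
    refine ⟨g 0, (List.ofFn fun i : Fin n => g i.succ.castSucc ++ w i.succ).flatten
      ++ g (Fin.last (n + 1)), ?_, ?_⟩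
    · simp [List.ofFn_succ, List.append_assoc]
    · simpa only [List.ofFn_succ, Fin.succ_castSucc, Fin.succ_last]
        using ih (fun i => w i.succ) (fun i => g i.succ)

theorem exists_interleave_of_orderedFactors_ofFn {α : Type*} {n : ℕ} (w : Fin n → List α)
    {u : List α} (h : OrderedFactors (List.ofFn w) u) :
    ∃ g : Fin (n + 1) → List α,
      u = (List.ofFn fun i : Fin n => g i.castSucc ++ w i).flatten ++ g (Fin.last n) := by
  induction n generalizing u with
  | zero => exact ⟨fun _ => u, by simp⟩
  | succ n ih =>
    rw [List.ofFn_succ] at h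
    obtain ⟨x, y, rfl, hy⟩ := h
    obtain ⟨g, rfl⟩ := ih (fun i => w i.succ) hy
    refine ⟨Fin.cons x g, ?_⟩
    simp only [List.ofFn_succ, Fin.castSucc_zero, Fin.cons_zero, ← Fin.succ_castSucc,
      Fin.cons_succ, ← Fin.succ_last, List.flatten_cons, List.append_assoc]

theorem mem_factorTuples_iff {α : Type*} {n : ℕ} {L : Set (List α)} {w : Fin n → List α} :
    w ∈ FactorTuples n L ↔ ∃ u ∈ L, OrderedFactors (List.ofFn w) u := by
  constructor
  · rintro ⟨u, hu, g, rfl⟩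
    exact ⟨_, hu, orderedFactors_ofFn_interleave w g⟩
  · rintro ⟨u, hu, h⟩
    exact ⟨u, hu, exists_interleave_of_orderedFactors_ofFn w h⟩

theorem factorTuples_mono {α : Type*} {n : ℕ} {L L' : Set (List α)} (h : L ⊆ L') :
    FactorTuples n L ⊆ FactorTuples n L' :=
  fun _ ⟨u, hu, g, hg⟩ => ⟨u, h hu, g, hg⟩

theorem factorTuples_iUnion {α ι : Type*} (n : ℕ) (S : ι → Set (List α)) :
    FactorTuples n (⋃ i, S i) = ⋃ i, FactorTuples n (S i) := by
  ext w
  simp only [FactorTuples, Set.mem_iUnion, Set.mem_ofPred_eq]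
  constructor
  · rintro ⟨u, ⟨i, hu⟩, hg⟩
    exact ⟨i, u, hu, hg⟩
  · rintro ⟨i, u, hu, hg⟩
    exact ⟨u, ⟨i, hu⟩, hg⟩

theorem blockIdx_zero_val {k n : ℕ} (ns : Fin (k + 1) → ℕ) (h : ∑ j, ns j = n)
    (i : Fin (ns 0)) : (blockIdx ns h 0 i : ℕ) = i := by
  simp [blockIdx]

theorem blockIdx_succ_val {k n n' : ℕ} (ns : Fin (k + 1) → ℕ) (h : ∑ j, ns j = n)
    (h' : ∑ j : Fin k, ns j.succ = n') (j : Fin k) (i : Fin (ns j.succ)) :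
    (blockIdx ns h j.succ i : ℕ) = ns 0 + blockIdx (fun j => ns j.succ) h' j i := by
  simp only [blockIdx, Finset.sum_filter, Fin.sum_univ_succ, Fin.succ_pos, if_true,
    Fin.succ_lt_succ_iff]
  omega

theorem flatten_ofFn_blocks {α : Type*} {k n : ℕ} (ns : Fin k → ℕ) (h : ∑ j, ns j = n)
    (w : Fin n → List α) :
    (List.ofFn fun j => List.ofFn fun i => w (blockIdx ns h j i)).flatten = List.ofFn w := by
  induction k generalizing n with
  | zero =>
    obtain rfl : n = 0 := by simpa using h.symm
    simp
  | succ k ih =>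
    obtain rfl : n = ns 0 + ∑ j : Fin k, ns j.succ := by rw [← h, Fin.sum_univ_succ]
    rw [List.ofFn_succ, List.flatten_cons, List.ofFn_add, ← ih (fun j => ns j.succ) rfl]
    congr 1
    · exact List.ofFn_inj.2 (funext fun i => congrArg w (Fin.ext (blockIdx_zero_val ns h i)))
    · refine congrArg List.flatten (List.ofFn_inj.2 (funext fun j => ?_))
      exact List.ofFn_inj.2 (funext fun i =>
        congrArg w (Fin.ext (blockIdx_succ_val ns h rfl j i)))

theorem prodFT_subset_factorTuples {α : Type*} {k n : ℕ} {L : Set (List α)}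
    {Ls : Fin k → Set (List α)} (ns : Fin k → ℕ) (h : ∑ j, ns j = n)
    (hL : {u : Fin k → List α | ∀ j, u j ∈ Ls j} ⊆ FactorTuples k L) :
    ProdFT ns Ls h ⊆ FactorTuples n L := by
  intro w hw
  choose u hu hblock using fun j => mem_factorTuples_iff.1 (hw j)
  obtain ⟨v, hv, hus⟩ := mem_factorTuples_iff.1 (hL hu)
  refine mem_factorTuples_iff.2 ⟨v, hv, ?_⟩
  rw [← flatten_ofFn_blocks ns h w]
  exact OrderedFactors.flatten_ofFn hblock hus

theorem exists_apply_or_apply_empty_of_iUnion {β : Type*} {p : Set β → Prop}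
    (hp : ∀ S T, p (S ∪ T) → p S ∨ p T) {m : ℕ} {S : Fin m → Set β} (hS : p (⋃ i, S i)) :
    (∃ i, p (S i)) ∨ p ∅ := by
  induction m with
  | zero => exact Or.inr (by simpa using hS)
  | succ m ih =>
    rw [Set.iUnion_fin_add_one_eq_iUnion_succ] at hS
    rcases hp _ _ hS with h0 | hrest
    · exact Or.inl ⟨0, h0⟩
    · exact (ih hrest).imp_left fun ⟨i, hi⟩ => ⟨i.succ, hi⟩

theorem unboundedness_pred_of_approx_general {α : Type}
    (L : Set (List α)) (m k : ℕ) (R : Fin m → Fin k → Set (List α))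
    (Rall : Set (List α)) (hRall : Rall = ⋃ i, LangConcFn (R i))
    (h1 : L ⊆ ⋃ i, LangConcFn (R i))
    (h2 : ∀ i, {w : Fin k → List α | ∀ j, w j ∈ R i j} ⊆ FactorTuples k L) :
    ∀ (n : ℕ) (p : Set (Fin n → List α) → Prop), IsUnbPred n p →
      (p (FactorTuples n L) ↔ p (FactorTuples n Rall)) := by
  rintro n p ⟨hmono, hunion, hdecomp⟩
  subst hRall
  refine ⟨fun hL => hmono _ _ hL (factorTuples_mono h1), fun hR => ?_⟩
  rw [factorTuples_iUnion] at hR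
  rcases exists_apply_or_apply_empty_of_iUnion hunion hR with ⟨i, hi⟩ | hempty
  · obtain ⟨ns, hsum, hprod⟩ := hdecomp k (R i) hi
    exact hmono _ _ hprod (prodFT_subset_factorTuples ns hsum (h2 i))
  · exact hmono _ _ hempty (Set.empty_subset _)

/-- If `L ⊆ ⋃_{i=1}^m R_{i,1}⋯R_{i,k}` and
`R_{i,1} × ⋯ × R_{i,k} ⊆ F_k(L)` for every `i`, then with
`R = ⋃_{i=1}^m R_{i,1}⋯R_{i,k}`, for every `n`-dimensional unboundedness predicate
`p` we have `p(F_n(L)) ↔ p(F_n(R))`. -/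
theorem unboundedness_pred_of_approx {α : Type} [Fintype α]
    (L : Set (List α)) (m k : ℕ) (R : Fin m → Fin k → Set (List α))
    (Rall : Set (List α)) (hRall : Rall = ⋃ i, LangConcFn (R i))
    (h1 : L ⊆ ⋃ i, LangConcFn (R i))
    (h2 : ∀ i, {w : Fin k → List α | ∀ j, w j ∈ R i j} ⊆ FactorTuples k L) :
    ∀ (n : ℕ) (p : Set (Fin n → List α) → Prop), IsUnbPred n p →
      (p (FactorTuples n L) ↔ p (FactorTuples n Rall)) :=
  unboundedness_pred_of_approx_general L m k R Rall hRall h1 h2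
end

section
/- Let w1,…,wn ∈ Σ*, let L0, L1 ⊆ w1*⋯wn*, and for i ∈ {0,1} let U_i = {(x1,…,xn) ∈ ℕ^n : w1^{x1}⋯wn^{xn} ∈ L_i}. Then L0 is separable from L1 by a bounded regular language if and only if U0 is separable from U1 by a recognizable subset of ℕ^n. -/
/-!
If `S` is recognized by a DFA, the state reached on `w₁^{x₁} ⋯ wₙ^{xₙ}` only depends on the
powers `δ(wᵢ)^{xᵢ}` of the transformations the `wᵢ` induce on the finite state set, so
`x ↦ (δ(wᵢ)^{xᵢ})ᵢ` recognizes `{x | w₁^{x₁} ⋯ wₙ^{xₙ} ∈ S}`.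

Conversely, if `φ : ℕ^n → M` recognizes `U`, then the words over the alphabet `{1, …, n}` that
are sorted and whose Parikh vector lies in `U` form a regular language (an intersection of two
evident automata), and the morphism `i ↦ wᵢ` maps it onto `{w₁^{x₁} ⋯ wₙ^{xₙ} | x ∈ U}`.
Morphic images of regular languages are regular (by Myhill–Nerode), and this bounded language
contains `L₀` because every word of `L₀` is some `w₁^{x₁} ⋯ wₙ^{xₙ}` with `x ∈ U₀ ⊆ U`.
-/

theorem isRegularLang_iff_isRegular {α : Type*} {L : Set (List α)} :
    IsRegularLang L ↔ Language.IsRegular L :=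
  exists_congr fun _ => exists_congr fun _ => exists_congr fun _ => Set.ext_iff.symm

theorem List.exists_of_flatMap_eq_append {α Γ : Type*} (h : Γ → List α) {k : List Γ}
    {u v : List α} (hk : k.flatMap h = u ++ v) :
    ∃ k₁ k₂ s, k = k₁ ++ k₂ ∧ (s = [] ∨ ∃ a, s <:+ h a) ∧
      k₁.flatMap h = u ++ s ∧ v = s ++ k₂.flatMap h := by
  induction k generalizing u with
  | nil =>
    obtain ⟨rfl, rfl⟩ := List.append_eq_nil_iff.1 hk.symm
    exact ⟨[], [], [], rfl, .inl rfl, rfl, rfl⟩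
  | cons a k ih =>
    rw [List.flatMap_cons, List.append_eq_append_iff] at hk
    obtain ⟨u', rfl, hk'⟩ | ⟨s, has, rfl⟩ := hk
    · obtain ⟨k₁, k₂, s, rfl, hs, hk₁, rfl⟩ := ih hk'
      exact ⟨a :: k₁, k₂, s, rfl, hs, by simp [hk₁], rfl⟩
    · exact ⟨[a], k, s, rfl, .inr ⟨a, has ▸ List.suffix_append u s⟩, by simp [has], rfl⟩

namespace Language

variable {α Γ : Type*}

theorem IsRegular.image_flatMap [Finite Γ] {K : Language Γ} (hK : K.IsRegular)
    (h : Γ → List α) : Language.IsRegular ((fun k => k.flatMap h) '' K) := by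
  let I : Language α := (fun k => k.flatMap h) '' K
  let suffixes : Set (List α) := {s | s = [] ∨ ∃ a, s <:+ h a}
  have hsuffixes : suffixes.Finite := by
    refine (Set.finite_iUnion fun a => (h a).tails.finite_toSet).insert [] |>.subset ?_
    rintro s (rfl | ⟨a, hs⟩)
    · exact Set.mem_insert _ _
    · exact Set.mem_insert_of_mem _ (Set.mem_iUnion.2 ⟨a, by simpa using hs⟩)
  -- A left quotient of the image by `u` is determined by the left quotients of `K` by the words
  -- `k₁` whose image is `u` followed by a suffix of some `h a`.
  let G : Set (Language Γ × List α) → Language α :=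
    fun P => {v | ∃ p ∈ P, ∃ k₂ ∈ p.1, v = p.2 ++ k₂.flatMap h}
  have hquot : ∀ u, I.leftQuotient u = G {p | p.2 ∈ suffixes ∧
      ∃ k₁, p.1 = K.leftQuotient k₁ ∧ k₁.flatMap h = u ++ p.2} := by
    intro u
    ext v
    constructor
    · rintro ⟨k, hk, hkuv⟩
      obtain ⟨k₁, k₂, s, rfl, hs, hk₁, rfl⟩ := List.exists_of_flatMap_eq_append h hkuv
      exact ⟨(K.leftQuotient k₁, s), ⟨hs, k₁, rfl, hk₁⟩, k₂, hk, rfl⟩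
    · rintro ⟨⟨_, s⟩, ⟨hs, k₁, rfl, hk₁⟩, k₂, hk₂, rfl⟩
      exact ⟨k₁ ++ k₂, hk₂, by simp [hk₁]⟩
  refine .of_finite_range_leftQuotient <|
    ((hK.finite_range_leftQuotient.prod hsuffixes).finite_subsets.image G).subset ?_
  rintro _ ⟨u, rfl⟩
  refine ⟨_, ?_, (hquot u).symm⟩
  rintro ⟨_, s⟩ ⟨hs, k₁, rfl, -⟩
  exact ⟨⟨k₁, rfl⟩, hs⟩

section Sorted

variable [Preorder Γ] [DecidableLE Γ]

/-- The state `some b` records a lower bound `b` for the letters still to come; `none` is a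
sink. -/
def sortedDFA (Γ : Type*) [Preorder Γ] [DecidableLE Γ] : DFA Γ (Option (WithBot Γ)) where
  step s a := s.bind fun b => if b ≤ a then some (a : WithBot Γ) else none
  start := some ⊥
  accept := {s | s.isSome}

theorem sortedDFA_evalFrom_none (u : List Γ) : (sortedDFA Γ).evalFrom none u = none := by
  induction u with
  | nil => rfl
  | cons a u ih => exact ih

theorem isSome_sortedDFA_evalFrom (b : WithBot Γ) (u : List Γ) :
    ((sortedDFA Γ).evalFrom (some b) u).isSome ↔ (∀ a ∈ u, b ≤ a) ∧ u.Pairwise (· ≤ ·) := by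
  induction u generalizing b with
  | nil => simp [DFA.evalFrom]
  | cons a u ih =>
    rw [DFA.evalFrom_cons, List.pairwise_cons, List.forall_mem_cons]
    by_cases hba : b ≤ a
    · have hstep : (sortedDFA Γ).step (some b) a = some (a : WithBot Γ) := by
        simp [sortedDFA, hba]
      rw [hstep, ih]
      simp only [WithBot.coe_le_coe, hba, true_and]
      exact ⟨fun ⟨hau, hu⟩ => ⟨fun c hc => hba.trans (WithBot.coe_le_coe.2 (hau c hc)), hau, hu⟩,
        And.right⟩
    · have hstep : (sortedDFA Γ).step (some b) a = none := by simp [sortedDFA, hba]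
      simp [hstep, sortedDFA_evalFrom_none, hba]

theorem isRegular_setOf_pairwise_le [Fintype Γ] :
    Language.IsRegular {u : List Γ | u.Pairwise (· ≤ ·)} := by
  refine Language.isRegular_iff.2 ⟨_, inferInstance, sortedDFA Γ, ?_⟩
  ext u
  exact (isSome_sortedDFA_evalFrom ⊥ u).trans (and_iff_right fun _ _ => bot_le)

end Sorted

section Parikh

variable [DecidableEq Γ]

def parikh (u : List Γ) : Γ → ℕ := fun a => u.count a

theorem parikh_nil : parikh ([] : List Γ) = 0 := rfl

theorem parikh_cons (a : Γ) (u : List Γ) : parikh (a :: u) = Pi.single a 1 + parikh u := by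
  ext b
  by_cases hab : a = b
  · subst hab
    simp [parikh, add_comm]
  · simp [parikh, hab, Ne.symm hab]

theorem isRegular_setOf_parikh_mem {M : Type} [AddMonoid M] [Finite M] (φ : (Γ → ℕ) →+ M)
    (F : Set M) : Language.IsRegular {u : List Γ | φ (parikh u) ∈ F} := by
  let A : DFA Γ M := ⟨fun m a => m + φ (Pi.single a 1), 0, F⟩
  have hA : ∀ m u, A.evalFrom m u = m + φ (parikh u) := by
    intro m u
    induction u generalizing m with
    | nil => rw [DFA.evalFrom_nil, parikh_nil, map_zero, add_zero]
    | cons a u ih => rw [DFA.evalFrom_cons, ih, parikh_cons, map_add, add_assoc]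
  refine ⟨M, Fintype.ofFinite M, A, ?_⟩
  ext u
  show A.evalFrom 0 u ∈ F ↔ _
  rw [hA, zero_add]
  rfl

end Parikh

end Language

open Language

section ExponentVectors

variable {α : Type*} {n : ℕ}

def wpowProd (ws : Fin n → List α) (x : Fin n → ℕ) : List α :=
  (List.ofFn fun i => wpow (ws i) (x i)).flatten

theorem langStar_singleton (w : List α) : LangStar {w} = Set.range (wpow w) := by
  ext v
  constructor
  · rintro ⟨us, hus, rfl⟩
    refine ⟨us.length, ?_⟩
    rw [wpow, ← List.eq_replicate_iff.2 ⟨rfl, hus⟩]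
  · rintro ⟨k, rfl⟩
    exact ⟨List.replicate k w, fun u hu => List.eq_of_mem_replicate hu, rfl⟩

theorem langConcFn_langStar_singleton (ws : Fin n → List α) :
    LangConcFn (fun i => LangStar {ws i}) = Set.range (wpowProd ws) := by
  ext v
  simp only [LangConcFn, langStar_singleton, Set.mem_range, Set.mem_ofPred_eq]
  constructor
  · rintro ⟨vs, hvs, rfl⟩
    choose x hx using hvs
    exact ⟨x, by simp only [wpowProd, hx]⟩
  · rintro ⟨x, rfl⟩
    exact ⟨_, fun i => ⟨x i, rfl⟩, rfl⟩

def sortedWord (x : Fin n → ℕ) : List (Fin n) :=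
  (List.ofFn fun i => List.replicate (x i) i).flatten

theorem flatMap_sortedWord (ws : Fin n → List α) (x : Fin n → ℕ) :
    (sortedWord x).flatMap ws = wpowProd ws x := by
  simp only [sortedWord, wpowProd, wpow, List.flatMap_def, List.map_flatten, List.flatten_flatten,
    List.map_ofFn]
  simp [Function.comp_def]

theorem pairwise_sortedWord (x : Fin n → ℕ) : (sortedWord x).Pairwise (· ≤ ·) := by
  simp only [sortedWord, List.pairwise_flatten, List.pairwise_ofFn, List.mem_ofFn,
    List.mem_replicate]
  simpa using fun i j (hij : i < j) _ _ => hij.le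

theorem parikh_sortedWord (x : Fin n → ℕ) : parikh (sortedWord x) = x := by
  ext i
  simp [parikh, sortedWord, List.count_flatten, List.sum_ofFn, List.count_replicate,
    Function.comp_def]

theorem sortedWord_parikh {u : List (Fin n)} (hu : u.Pairwise (· ≤ ·)) :
    sortedWord (parikh u) = u :=
  List.Perm.eq_of_pairwise' (pairwise_sortedWord _) hu <|
    List.perm_iff_count.2 fun i => congrFun (parikh_sortedWord (parikh u)) i

theorem image_flatMap_setOf_pairwise_le (ws : Fin n → List α) (U : Set (Fin n → ℕ)) :
    (fun u => u.flatMap ws) '' {u | u.Pairwise (· ≤ ·) ∧ parikh u ∈ U} = wpowProd ws '' U := by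
  ext w
  constructor
  · rintro ⟨u, ⟨hu, hU⟩, rfl⟩
    exact ⟨parikh u, hU, by rw [← flatMap_sortedWord, sortedWord_parikh hu]⟩
  · rintro ⟨x, hx, rfl⟩
    exact ⟨sortedWord x, ⟨pairwise_sortedWord x, by rwa [parikh_sortedWord]⟩,
      flatMap_sortedWord ws x⟩

theorem isRegular_image_wpowProd (ws : Fin n → List α) {U : Set (Fin n → ℕ)}
    (hU : IsRecognizable U) : Language.IsRegular (wpowProd ws '' U) := by
  obtain ⟨M, _, _, φ, hφ⟩ := hU
  rw [← image_flatMap_setOf_pairwise_le, hφ]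
  exact (isRegular_setOf_pairwise_le.inf (isRegular_setOf_parikh_mem φ _)).image_flatMap ws

end ExponentVectors

section Recognizable

variable {α : Type*} {n : ℕ}

theorem isRecognizable_of_map_eq {M : Type} [AddMonoid M] [Finite M] (φ : (Fin n → ℕ) →+ M)
    {U : Set (Fin n → ℕ)} (hU : ∀ x y, φ x = φ y → x ∈ U → y ∈ U) : IsRecognizable U := by
  refine ⟨M, inferInstance, inferInstance, φ, Set.Subset.antisymm (fun x hx => ⟨x, hx, rfl⟩) ?_⟩
  rintro y ⟨x, hx, hxy⟩
  exact hU x y hxy hx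

def DFA.wordAction {σ : Type*} (A : DFA α σ) (w : List α) : Function.End σ :=
  fun s => A.evalFrom s w

theorem DFA.evalFrom_wpow {σ : Type*} (A : DFA α σ) (w : List α) (k : ℕ) (s : σ) :
    A.evalFrom s (wpow w k) = (A.wordAction w ^ k) s := by
  induction k generalizing s with
  | zero => rfl
  | succ k ih =>
    rw [wpow, List.replicate_succ, List.flatten_cons, DFA.evalFrom_of_append, ← wpow, ih,
      pow_succ]
    rfl

theorem DFA.evalFrom_wpowProd_congr {σ : Type*} (A : DFA α σ) :
    ∀ {n : ℕ} (ws : Fin n → List α) {x y : Fin n → ℕ},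
      (∀ i, A.wordAction (ws i) ^ x i = A.wordAction (ws i) ^ y i) →
      ∀ s, A.evalFrom s (wpowProd ws x) = A.evalFrom s (wpowProd ws y)
  | 0, _, _, _, _, _ => rfl
  | n + 1, ws, x, y, h, s => by
    simp only [wpowProd, List.ofFn_succ, List.flatten_cons, DFA.evalFrom_of_append,
      A.evalFrom_wpow, h 0]
    exact A.evalFrom_wpowProd_congr (fun i => ws i.succ) (fun i => h i.succ) _

theorem isRecognizable_preimage_wpowProd (ws : Fin n → List α) {S : Language α}
    (hS : S.IsRegular) : IsRecognizable {x | wpowProd ws x ∈ S} := by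
  obtain ⟨σ, _, A, rfl⟩ := hS
  let φ : (Fin n → ℕ) →+ (Fin n → Additive (Function.End σ)) :=
    AddMonoidHom.pi fun i =>
      (multiplesHom _ (Additive.ofMul (A.wordAction (ws i)))).comp (Pi.evalAddMonoidHom _ i)
  have : Finite (Function.End σ) := inferInstanceAs (Finite (σ → σ))
  refine isRecognizable_of_map_eq φ fun x y hxy hx => ?_
  have hpow : ∀ i, A.wordAction (ws i) ^ x i = A.wordAction (ws i) ^ y i :=
    fun i => congrArg Additive.toMul (congrFun hxy i)
  rwa [Set.mem_ofPred_eq, DFA.mem_accepts, DFA.eval, ← A.evalFrom_wpowProd_congr ws hpow]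

end Recognizable

theorem separability_bounded_regular_iff_recognizable_general {α : Type}
    {n : ℕ} (ws : Fin n → List α) (L0 L1 : Set (List α))
    (h0 : L0 ⊆ LangConcFn fun i => LangStar {ws i}) :
    (∃ S : Set (List α), IsRegularLang S ∧ IsBoundedLang S ∧ L0 ⊆ S ∧ L1 ∩ S = ∅) ↔
    (∃ U : Set (Fin n → ℕ), IsRecognizable U ∧
      {x : Fin n → ℕ | (List.ofFn fun i => wpow (ws i) (x i)).flatten ∈ L0} ⊆ U ∧
      {x : Fin n → ℕ | (List.ofFn fun i => wpow (ws i) (x i)).flatten ∈ L1} ∩ U = ∅) := by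
  rw [langConcFn_langStar_singleton] at h0
  constructor
  · rintro ⟨S, hS, -, hL0, hL1⟩
    refine ⟨{x | wpowProd ws x ∈ S}, isRecognizable_preimage_wpowProd ws
      (isRegularLang_iff_isRegular.1 hS), fun x hx => hL0 hx, ?_⟩
    exact Set.eq_empty_of_forall_notMem fun x hx => hL1.subset hx
  · rintro ⟨U, hU, hU0, hU1⟩
    refine ⟨wpowProd ws '' U, isRegularLang_iff_isRegular.2 (isRegular_image_wpowProd ws hU),
      ⟨n, ws, ?_⟩, ?_, ?_⟩
    · rw [langConcFn_langStar_singleton]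
      exact Set.image_subset_range _ _
    · intro w hw
      obtain ⟨x, rfl⟩ := h0 hw
      exact ⟨x, hU0 hw, rfl⟩
    · refine Set.eq_empty_of_forall_notMem ?_
      rintro _ ⟨hw, x, hx, rfl⟩
      exact hU1.subset ⟨hw, hx⟩

/-- For `L0, L1 ⊆ w1*⋯wn*` and
`U_i = {(x1,…,xn) : w1^{x1}⋯wn^{xn} ∈ L_i}`, `L0` is separable from `L1` by a
bounded regular language iff `U0` is separable from `U1` by a recognizable subset
of `ℕ^n`. -/
theorem separability_bounded_regular_iff_recognizable {α : Type} [Fintype α]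
    {n : ℕ} (ws : Fin n → List α) (L0 L1 : Set (List α))
    (h0 : L0 ⊆ LangConcFn fun i => LangStar {ws i})
    (h1 : L1 ⊆ LangConcFn fun i => LangStar {ws i}) :
    (∃ S : Set (List α), IsRegularLang S ∧ IsBoundedLang S ∧ L0 ⊆ S ∧ L1 ∩ S = ∅) ↔
    (∃ U : Set (Fin n → ℕ), IsRecognizable U ∧
      {x : Fin n → ℕ | (List.ofFn fun i => wpow (ws i) (x i)).flatten ∈ L0} ⊆ U ∧
      {x : Fin n → ℕ | (List.ofFn fun i => wpow (ws i) (x i)).flatten ∈ L1} ∩ U = ∅) :=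
  separability_bounded_regular_iff_recognizable_general ws L0 L1 h0
end

section
/- Let a1,…,an ∈ Σ be letters and L1,…,Lk ⊆ Σ* be languages. If a1* × a2* × ⋯ × an* ⊆ dcl(F_n(L1·L2⋯Lk)), then there is a decomposition n = n1+⋯+nk such that a1* × ⋯ × an* ⊆ dcl(F_{n1}(L1) × F_{n2}(L2) × ⋯ × F_{nk}(Lk)). -/
/-!
Apply the hypothesis with exponents `k * xᵢ + 1`: the word `a₁^(k x₁ + 1) ⋯ aₙ^(k xₙ + 1)` is a
subword of some `w₁ ⋯ w_k` with `wⱼ ∈ Lⱼ`. Cutting it along the `wⱼ` splits each exponent as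
`k xᵢ + 1 = ∑ⱼ r i j`, so by pigeonhole every block `i` has a piece `J i` with `xᵢ < r i (J i)`.
The pieces are consecutive, so `J` is monotone, and its fibres give a decomposition
`n = n₁ + ⋯ + n_k` that works for `x`. As there are finitely many decompositions and membership
for a fixed decomposition is antitone in `x`, a single decomposition works for every `x`.
-/

namespace List

variable {α : Type*}

theorem ofFn_comp_sublist {n m : ℕ} (F : Fin n → α) {f : Fin m → Fin n} (hf : StrictMono f) :
    ofFn (F ∘ f) <+ ofFn F := by
  have hsub : ofFn f <+ finRange n :=
    sublist_of_subperm_of_sortedLE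
      ((nodup_ofFn.mpr hf.injective).subperm fun i _ => mem_finRange i)
      (sortedLT_ofFn_iff.mpr hf).sortedLE (sortedLT_finRange n).sortedLE
  simpa [← map_ofFn, ofFn_eq_map (f := F)] using hsub.map F

theorem flatten_ofFn_sublist_flatten_ofFn {n : ℕ} {z w : Fin n → List α}
    (h : ∀ i, z i <+ w i) : (ofFn z).flatten <+ (ofFn w).flatten := by
  induction n with
  | zero => simp
  | succ m ih =>
    simp only [ofFn_succ, flatten_cons]
    exact (h 0).append (ih fun i => h i.succ)

theorem exists_flatten_ofFn_append_of_flatten_ofFn_sublist :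
    ∀ {m : ℕ} {z : Fin m → List α} {u : List α}, (ofFn z).flatten <+ u →
      ∃ (q : Fin m → List α) (rest : List α), u = (ofFn q).flatten ++ rest ∧ ∀ t, z t <+ q t
  | 0, _, u, _ => ⟨Fin.elim0, u, by simp, fun t => t.elim0⟩
  | m + 1, z, _, h => by
    rw [ofFn_succ, flatten_cons] at h
    obtain ⟨u₁, u₂, rfl, h₁, h₂⟩ := append_sublist_iff.mp h
    obtain ⟨q, rest, rfl, hq⟩ := exists_flatten_ofFn_append_of_flatten_ofFn_sublist h₂
    exact ⟨Fin.cons u₁ q, rest, by simp, Fin.cases h₁ hq⟩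

theorem exists_flatten_ofFn_eq_of_sublist_flatten_ofFn :
    ∀ {k : ℕ} {ws : Fin k → List α} {z : List α}, z <+ (ofFn ws).flatten →
      ∃ ps : Fin k → List α, z = (ofFn ps).flatten ∧ ∀ j, ps j <+ ws j
  | 0, _, _, h => ⟨Fin.elim0, by simpa using h, fun j => j.elim0⟩
  | k + 1, ws, _, h => by
    rw [ofFn_succ, flatten_cons] at h
    obtain ⟨z₁, z₂, rfl, h₁, h₂⟩ := sublist_append_iff.mp h
    obtain ⟨ps, rfl, hps⟩ := exists_flatten_ofFn_eq_of_sublist_flatten_ofFn h₂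
    exact ⟨Fin.cons z₁ ps, by simp, Fin.cases h₁ hps⟩

end List

open Finset in
theorem Fin.lt_card_filter_iff {n : ℕ} {p : Fin n → Prop} [DecidablePred p]
    (hp : ∀ ⦃i i'⦄, i ≤ i' → p i' → p i) (i : Fin n) : (i : ℕ) < #(univ.filter p) ↔ p i := by
  refine ⟨fun hi => ?_, fun hi => ?_⟩
  · by_contra hni
    have hsub : univ.filter p ⊆ Iio i := fun i' hi' =>
      mem_Iio.mpr (lt_of_not_ge fun h => hni (hp h (mem_filter.mp hi').2))
    have := card_le_card hsub
    rw [Fin.card_Iio] at this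
    omega
  · have hsub : Iic i ⊆ univ.filter p := fun i' hi' =>
      mem_filter.mpr ⟨mem_univ _, hp (mem_Iic.mp hi') hi⟩
    have := card_le_card hsub
    rw [Fin.card_Iic] at this
    omega

section Blocks

variable {k n : ℕ} (ns : Fin k → ℕ) (hs : ∑ j, ns j = n)

theorem val_blockIdx (j : Fin k) (t : Fin (ns j)) :
    (blockIdx ns hs j t : ℕ) = finSigmaFinEquiv (⟨j, t⟩ : (j : Fin k) × Fin (ns j)) := by
  rw [finSigmaFinEquiv_apply]
  simp only [blockIdx]
  congr 1
  rw [Finset.filter_gt_eq_Iio]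
  refine (Finset.sum_nbij (Fin.castLE j.2.le) (fun i _ => ?_) (Fin.castLE_injective _).injOn
    (fun i hi => ?_) fun _ _ => rfl).symm
  · simp [Fin.lt_def]
  · exact ⟨⟨i, Fin.lt_def.mp (Finset.mem_Iio.mp hi)⟩, by simp, rfl⟩

def blockEquiv : (Σ j, Fin (ns j)) ≃ Fin n :=
  finSigmaFinEquiv.trans (finCongr hs)

@[simp]
theorem blockEquiv_mk (j : Fin k) (t : Fin (ns j)) :
    blockEquiv ns hs ⟨j, t⟩ = blockIdx ns hs j t :=
  Fin.ext (val_blockIdx ns hs j t).symm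

theorem blockIdx_strictMono (j : Fin k) : StrictMono (blockIdx ns hs j) :=
  fun _ _ h => Nat.add_lt_add_left h _

end Blocks

open Finset in
theorem exists_blockIdx_of_monotone {n k : ℕ} {σ : Fin n → Fin k} (hσ : Monotone σ) :
    ∃ (ns : Fin k → ℕ) (hs : ∑ j, ns j = n), ∀ j t, σ (blockIdx ns hs j t) = j := by
  classical
  have hs : ∑ j, #{i | σ i = j} = n := by
    simpa using sum_card_fiberwise_eq_card_filter univ univ σ
  refine ⟨_, hs, fun j t => ?_⟩
  have hlt : ∑ j' ∈ univ.filter (· < j), #{i | σ i = j'} = #{i | σ i < j} := by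
    simpa using sum_card_fiberwise_eq_card_filter univ (univ.filter (· < j)) σ
  have hle : #{i | σ i ≤ j} = #{i | σ i < j} + #{i | σ i = j} := by
    rw [← card_union_of_disjoint (disjoint_filter.mpr fun _ _ h => h.ne), ← filter_or]
    simp only [le_iff_lt_or_eq]
  have hval : (blockIdx _ hs j t : ℕ) = #{i | σ i < j} + t := by
    rw [← hlt]
    rfl
  have ht := t.2
  apply le_antisymm
  · refine (Fin.lt_card_filter_iff (fun i i' h h' => (hσ h).trans h') _).mp ?_
    rw [hval, hle]
    omega
  · refine not_lt.mp fun h => ?_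
    have := (Fin.lt_card_filter_iff (fun i i' h h' => (hσ h).trans_lt h') _).mpr h
    omega

open List

variable {α : Type*}

theorem mem_dclT_factorTuples_of_flatten_sublist {m : ℕ} {L : Set (List α)}
    {z : Fin m → List α} {u : List α} (hu : u ∈ L) (hz : (ofFn z).flatten <+ u) :
    z ∈ dclT (FactorTuples m L) := by
  obtain ⟨q, rest, rfl, hq⟩ := exists_flatten_ofFn_append_of_flatten_ofFn_sublist hz
  exact ⟨q, ⟨_, hu, Fin.snoc (fun _ => []) rest, by simp⟩, hq⟩

theorem mem_dclT_prodFT {k n : ℕ} {ns : Fin k → ℕ} {Ls : Fin k → Set (List α)}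
    {hs : ∑ j, ns j = n} {z : Fin n → List α}
    (hz : ∀ j, (fun t => z (blockIdx ns hs j t)) ∈ dclT (FactorTuples (ns j) (Ls j))) :
    z ∈ dclT (ProdFT ns Ls hs) := by
  choose v hv hzv using hz
  refine ⟨fun i => v ((blockEquiv ns hs).symm i).1 ((blockEquiv ns hs).symm i).2,
    fun j => ?_, fun i => ?_⟩
  · convert hv j using 1
    funext t
    dsimp only
    rw [← blockEquiv_mk, Equiv.symm_apply_apply]
  · obtain ⟨⟨j, t⟩, rfl⟩ := (blockEquiv ns hs).surjective i
    dsimp only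
    rw [Equiv.symm_apply_apply, blockEquiv_mk]
    exact hzv j t

theorem antitone_replicate_mem_dclT {n : ℕ} (a : Fin n → α) (S : Set (Fin n → List α)) :
    Antitone fun x : Fin n → ℕ => (fun i => replicate (x i) (a i)) ∈ dclT S :=
  fun _ _ hxy ⟨w, hw, hyw⟩ =>
    ⟨w, hw, fun i => ((replicate_sublist_replicate _).mpr (hxy i)).trans (hyw i)⟩

def powWord {n : ℕ} (a : Fin n → α) (c : Fin n → ℕ) : List α :=
  (ofFn fun i => replicate (c i) (a i)).flatten

@[simp]
theorem powWord_cons {n : ℕ} (b : α) (a : Fin n → α) (m : ℕ) (c : Fin n → ℕ) :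
    powWord (Fin.cons b a : Fin (n + 1) → α) (Fin.cons m c) = replicate m b ++ powWord a c := by
  simp [powWord, ofFn_succ]

@[simp]
theorem powWord_zero {n : ℕ} (a : Fin n → α) : powWord a 0 = [] := by
  simp [powWord]

theorem exists_powWord_eq_append {n : ℕ} {a : Fin n → α} {c : Fin n → ℕ} {p q : List α}
    (h : powWord a c = p ++ q) :
    ∃ c₁ ≤ c, p = powWord a c₁ ∧ q = powWord a (c - c₁) ∧
      ∀ ⦃i i'⦄, i < i' → c₁ i' ≠ 0 → c₁ i = c i := by
  induction n generalizing p q with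
  | zero =>
    obtain ⟨rfl, rfl⟩ : p = [] ∧ q = [] := by simpa [powWord] using h.symm
    exact ⟨0, zero_le, (powWord_zero a).symm, (powWord_zero a).symm, fun i => i.elim0⟩
  | succ n ih =>
    cases a using Fin.consCases with | cons b a =>
    cases c using Fin.consCases with | cons m c =>
    have cons_sub_cons : ∀ m₁ c₁, (Fin.cons m c - Fin.cons m₁ c₁ : Fin (n + 1) → ℕ) =
        Fin.cons (m - m₁) (c - c₁) := fun m₁ c₁ => by
      funext i
      cases i using Fin.cases <;> simp
    rw [powWord_cons] at h
    rcases append_eq_append_iff.mp h with ⟨p', rfl, hrest⟩ | ⟨p', hrep, rfl⟩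
    · obtain ⟨c₁, hle, rfl, rfl, hstair⟩ := ih hrest
      refine ⟨Fin.cons m c₁, Fin.cons_le_cons.mpr ⟨le_rfl, hle⟩, by simp,
        by simp [cons_sub_cons], fun i i' hii' hi' => ?_⟩
      cases i using Fin.cases with
      | zero => simp
      | succ i =>
        cases i' using Fin.cases with
        | zero => exact absurd hii' (Fin.not_lt_zero _)
        | succ i' =>
          simp only [Fin.cons_succ] at hi' ⊢
          exact hstair (Fin.succ_lt_succ_iff.mp hii') hi'
    · obtain ⟨hlen, hp, hp'⟩ := replicate_eq_append_iff.mp hrep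
      refine ⟨Fin.cons p.length 0, Fin.cons_le_cons.mpr ⟨by omega, zero_le⟩,
        by rw [powWord_cons, powWord_zero, append_nil, ← hp],
        by rw [cons_sub_cons, powWord_cons, tsub_zero, ← hlen, add_tsub_cancel_left, ← hp'],
        fun i i' hii' hi' => ?_⟩
      cases i' using Fin.cases with
      | zero => exact absurd hii' (Fin.not_lt_zero _)
      | succ i' => simp at hi'

theorem exists_powWord_eq_of_powWord_eq_flatten {n : ℕ} {a : Fin n → α} :
    ∀ {k : ℕ} {c : Fin n → ℕ} {ps : Fin k → List α}, powWord a c = (ofFn ps).flatten →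
      ∃ r : Fin n → Fin k → ℕ, (∀ i, ∑ j, r i j = c i) ∧
        (∀ j, powWord a (fun i => r i j) = ps j) ∧
        ∀ ⦃i i' j j'⦄, i < i' → j' < j → r i j ≠ 0 → r i' j' = 0
  | 0, c, _, h => by
    have hc : ∑ i, c i = 0 := by
      simpa [powWord, length_flatten, sum_ofFn] using congrArg length h
    exact ⟨fun _ => Fin.elim0, fun i => by simp [Finset.sum_eq_zero_iff.mp hc i],
      fun j => j.elim0, fun _ _ j => j.elim0⟩
  | k + 1, c, ps, h => by
    cases ps using Fin.consCases with | cons p ps =>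
    rw [ofFn_cons, flatten_cons] at h
    obtain ⟨c₁, hle, rfl, hrest, hstair₁⟩ := exists_powWord_eq_append h
    obtain ⟨r, hsum, hr, hstair⟩ := exists_powWord_eq_of_powWord_eq_flatten hrest.symm
    refine ⟨fun i => Fin.cons (c₁ i) (r i), fun i => ?_, fun j => ?_,
      fun i i' j j' hii' hjj' hij => ?_⟩
    · rw [Fin.sum_cons, hsum i, Pi.sub_apply]
      exact add_tsub_cancel_of_le (hle i)
    · cases j using Fin.cases <;> simp [hr]
    · cases j using Fin.cases with
      | zero => exact absurd hjj' (Fin.not_lt_zero _)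
      | succ j =>
        simp only [Fin.cons_succ] at hij
        cases j' using Fin.cases with
        | zero =>
          by_contra hi'
          have hci : c₁ i = c i := hstair₁ hii' hi'
          have hri : ∑ j, r i j = 0 := by rw [hsum i, Pi.sub_apply, hci, tsub_self]
          exact hij (Finset.sum_eq_zero_iff.mp hri j (Finset.mem_univ j))
        | succ j' => exact hstair hii' (Fin.succ_lt_succ_iff.mp hjj') hij

theorem exists_replicate_mem_dclT_prodFT {n k : ℕ} {a : Fin n → α}
    {Ls : Fin k → Set (List α)} {x : Fin n → ℕ}
    (h : (fun i => replicate (k * x i + 1) (a i)) ∈ dclT (FactorTuples n (LangConcFn Ls))) :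
    ∃ (ns : Fin k → ℕ) (hs : ∑ j, ns j = n),
      (fun i => replicate (x i) (a i)) ∈ dclT (ProdFT ns Ls hs) := by
  obtain ⟨v, ⟨_, ⟨ws, hws, rfl⟩, g, hug⟩, hv⟩ := h
  have hW : powWord a (fun i => k * x i + 1) <+ (ofFn ws).flatten := by
    rw [hug]
    exact (flatten_ofFn_sublist_flatten_ofFn fun i =>
      (hv i).trans (sublist_append_right _ _)).trans (sublist_append_left _ _)
  obtain ⟨ps, hps, hpws⟩ := exists_flatten_ofFn_eq_of_sublist_flatten_ofFn hW
  obtain ⟨r, hsum, hr, hstair⟩ := exists_powWord_eq_of_powWord_eq_flatten hps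
  have hJ : ∀ i, ∃ j, x i < r i j := fun i => by
    obtain ⟨j, -, hj⟩ := Finset.exists_lt_of_sum_lt (s := Finset.univ) (f := fun _ => x i)
      (g := r i) (by simp [hsum i])
    exact ⟨j, hj⟩
  choose J hJ using hJ
  have hJmono : Monotone J := fun i i' hii' => by
    rcases hii'.lt_or_eq with hlt | rfl
    · by_contra! hgt
      have := hstair hlt hgt (by have := hJ i; omega)
      have := hJ i'
      omega
    · rfl
  obtain ⟨ns, hs, hJblock⟩ := exists_blockIdx_of_monotone hJmono
  refine ⟨ns, hs, mem_dclT_prodFT fun j => mem_dclT_factorTuples_of_flatten_sublist (hws j) ?_⟩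
  calc (ofFn fun t => replicate (x (blockIdx ns hs j t)) (a (blockIdx ns hs j t))).flatten
      <+ (ofFn ((fun i => replicate (r i j) (a i)) ∘ blockIdx ns hs j)).flatten :=
        flatten_ofFn_sublist_flatten_ofFn fun t => (replicate_sublist_replicate _).mpr <| by
          simpa [hJblock j t] using (hJ (blockIdx ns hs j t)).le
    _ <+ powWord a (fun i => r i j) := (ofFn_comp_sublist _ (blockIdx_strictMono ns hs j)).flatten
    _ = ps j := hr j
    _ <+ ws j := hpws j

theorem exists_forall_of_forall_exists_of_antitone {ι β : Type*} [Finite ι] [Preorder β]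
    [IsDirectedOrder β] [Nonempty β] {P : ι → β → Prop} (hP : ∀ i, Antitone (P i))
    (h : ∀ x, ∃ i, P i x) : ∃ i, ∀ x, P i x := by
  by_contra! hne
  choose y hy using hne
  obtain ⟨b, hb⟩ := Finite.bddAbove_range y
  obtain ⟨i, hi⟩ := h b
  exact hy i (hP i (hb ⟨i, rfl⟩) hi)

theorem sup_predicate_decomposition_general {α : Type} {n k : ℕ}
    (a : Fin n → α) (Ls : Fin k → Set (List α))
    (h : ∀ x : Fin n → ℕ, (fun i => List.replicate (x i) (a i)) ∈
        dclT (FactorTuples n (LangConcFn Ls))) :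
    ∃ (ns : Fin k → ℕ) (hs : ∑ j, ns j = n),
      ∀ x : Fin n → ℕ,
        (fun i => List.replicate (x i) (a i)) ∈ dclT (ProdFT ns Ls hs) := by
  have : Finite {ns : Fin k → ℕ // ∑ j, ns j = n} :=
    Set.Finite.to_subtype (s := {ns : Fin k → ℕ | ∑ j, ns j = n})
      ((Finset.Nat.antidiagonalTuple k n).finite_toSet.subset
        fun _ => Finset.Nat.mem_antidiagonalTuple.mpr)
  obtain ⟨⟨ns, hs⟩, hns⟩ := exists_forall_of_forall_exists_of_antitone
    (P := fun (d : {ns : Fin k → ℕ // ∑ j, ns j = n}) (x : Fin n → ℕ) =>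
      (fun i => replicate (x i) (a i)) ∈ dclT (ProdFT d.1 Ls d.2))
    (fun _ => antitone_replicate_mem_dclT a _)
    fun x =>
      have ⟨ns, hs, hx⟩ := exists_replicate_mem_dclT_prodFT (h fun i => k * x i + 1)
      ⟨⟨ns, hs⟩, hx⟩
  exact ⟨ns, hs, hns⟩

/-- If `a1* × ⋯ × an* ⊆ dcl(F_n(L1⋯Lk))` then there is a decomposition
`n = n1 + ⋯ + nk` with `a1* × ⋯ × an* ⊆ dcl(F_{n1}(L1) × ⋯ × F_{nk}(Lk))`. -/
theorem sup_predicate_decomposition {α : Type} [Fintype α] {n k : ℕ}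
    (a : Fin n → α) (Ls : Fin k → Set (List α))
    (h : ∀ x : Fin n → ℕ, (fun i => List.replicate (x i) (a i)) ∈
        dclT (FactorTuples n (LangConcFn Ls))) :
    ∃ (ns : Fin k → ℕ) (hs : ∑ j, ns j = n),
      ∀ x : Fin n → ℕ,
        (fun i => List.replicate (x i) (a i)) ∈ dclT (ProdFT ns Ls hs) :=
  sup_predicate_decomposition_general a Ls h
end

section
/- Let a1,…,an ∈ Σ be letters and S1, S2 ⊆ (Σ*)^n. If a1* × a2* × ⋯ × an* ⊆ dcl(S1 ∪ S2), then a1* × ⋯ × an* ⊆ dcl(S1) or a1* × ⋯ × an* ⊆ dcl(S2). -/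
/-- If `a1* × ⋯ × an* ⊆ dcl(S1 ∪ S2)` then
`a1* × ⋯ × an* ⊆ dcl(S1)` or `a1* × ⋯ × an* ⊆ dcl(S2)`. -/
theorem dcl_union_case {α : Type} [Fintype α] {n : ℕ} (a : Fin n → α)
    (S1 S2 : Set (Fin n → List α))
    (h : ∀ x : Fin n → ℕ, (fun i => List.replicate (x i) (a i)) ∈ dclT (S1 ∪ S2)) :
    (∀ x : Fin n → ℕ, (fun i => List.replicate (x i) (a i)) ∈ dclT S1) ∨
    (∀ x : Fin n → ℕ, (fun i => List.replicate (x i) (a i)) ∈ dclT S2) := by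
  by_contra hc
  push_neg at hc
  obtain ⟨⟨x1, hx1⟩, ⟨x2, hx2⟩⟩ := hc
  obtain ⟨v, hv, hsub⟩ := h (fun i => max (x1 i) (x2 i))
  have key : ∀ x : Fin n → ℕ, (∀ i, x i ≤ max (x1 i) (x2 i)) →
      ∀ S : Set (Fin n → List α), v ∈ S →
      (fun i => List.replicate (x i) (a i)) ∈ dclT S := by
    intro x hx S hS
    exact ⟨v, hS, fun i => ((List.replicate_sublist_replicate (a i)).2 (hx i)).trans
      (hsub i)⟩
  rcases hv with hv | hv
  · exact hx1 (key x1 (fun i => le_max_left _ _) S1 hv)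
  · exact hx2 (key x2 (fun i => le_max_right _ _) S2 hv)
end

section
/- Let Σ be a finite alphabet, K, L ⊆ Σ*, and let c be a letter with c ∉ Σ; work over the alphabet Σ ∪ {c}. Then f_{cKc} (where cKc = {cvc : v ∈ K}) is unbounded on the language c(Lc)* = {c u1 c u2 c ⋯ u_m c : m ≥ 0, u1,…,u_m ∈ L} if and only if K ∩ L ≠ ∅. -/
private lemma split_lemma {α : Type} (c : α) :
    ∀ (u x s G : List α), c ∉ u → x ++ c :: s = u ++ c :: G →
      (x = u ∧ s = G) ∨ ∃ x', x = u ++ c :: x' ∧ x' ++ c :: s = G := by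
  intro u
  induction u with
  | nil =>
    intro x s G _ h
    cases x with
    | nil => left; simpa using h
    | cons a x' =>
      right
      simp only [List.cons_append, List.nil_append, List.cons.injEq] at h
      obtain ⟨rfl, h2⟩ := h
      exact ⟨x', by simp, h2⟩
  | cons b u' ih =>
    intro x s G hcu h
    cases x with
    | nil =>
      simp only [List.nil_append, List.cons_append, List.cons.injEq] at h
      exact absurd h.1.symm (by simp at hcu; tauto)
    | cons a x' =>
      simp only [List.cons_append, List.cons.injEq] at h
      obtain ⟨rfl, h2⟩ := h
      have hcu' : c ∉ u' := by simp at hcu; tauto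
      rcases ih x' s G hcu' h2 with ⟨rfl, rfl⟩ | ⟨x'', rfl, h3⟩
      · left; exact ⟨rfl, rfl⟩
      · right; exact ⟨x'', by simp, h3⟩

private lemma factor_mem {α : Type} (c : α) :
    ∀ (us : List (List α)) (x v y : List α), (∀ u ∈ us, c ∉ u) → c ∉ v →
      x ++ c :: (v ++ c :: y) = (us.map (fun u => u ++ [c])).flatten → v ∈ us := by
  intro us
  induction us with
  | nil => intro x v y _ _ h; simp at h
  | cons u rest ih =>
    intro x v y hus hv h
    rw [show (List.map (fun u => u ++ [c]) (u :: rest)).flatten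
        = u ++ c :: (List.map (fun u => u ++ [c]) rest).flatten from by simp] at h
    have hcu : c ∉ u := hus u (by simp)
    rcases split_lemma c u x (v ++ c :: y) _ hcu h with ⟨rfl, h2⟩ | ⟨x', rfl, h2⟩
    · cases rest with
      | nil => simp at h2
      | cons r rest2 =>
        rw [show (List.map (fun u => u ++ [c]) (r :: rest2)).flatten
            = r ++ c :: (List.map (fun u => u ++ [c]) rest2).flatten from by simp] at h2
        rcases split_lemma c r v y _ (hus r (by simp)) h2 with ⟨rfl, _⟩ | ⟨x'', rfl, _⟩
        · simp
        · exact absurd (by simp : c ∈ r ++ c :: x'') hv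
    · exact List.mem_cons_of_mem u (ih x' v y (fun u hu => hus u (by simp [hu])) hv h2)

private lemma factor_in_sep {α : Type} (c : α) (us : List (List α))
    (hus : ∀ u ∈ us, c ∉ u) (v : List α) (hv : c ∉ v) (x y : List α)
    (h : c :: (List.map (fun u => u ++ [c]) us).flatten = x ++ c :: (v ++ c :: y)) :
    v ∈ us := by
  cases x with
  | nil =>
    simp only [List.nil_append, List.cons.injEq] at h
    have h2 := h.2
    cases us with
    | nil => simp at h2
    | cons r rest =>
      rw [show (List.map (fun u => u ++ [c]) (r :: rest)).flatten
          = r ++ c :: (List.map (fun u => u ++ [c]) rest).flatten from by simp] at h2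
      rcases split_lemma c r v y _ (hus r (by simp)) h2.symm with ⟨rfl, _⟩ | ⟨x', rfl, _⟩
      · simp
      · exact absurd (by simp : c ∈ r ++ c :: x') hv
  | cons a x' =>
    simp only [List.cons_append, List.cons.injEq] at h
    exact factor_mem c us x' v y hus hv h.2.symm

private lemma rep_helper {α : Type} (B : List α) :
    ∀ k, (List.replicate (2*(k+1)) B).flatten
      = B ++ ((List.replicate k (B ++ B)).flatten ++ B) := by
  intro k
  induction k with
  | zero => simp [List.replicate]
  | succ n ih =>
    rw [show 2*(n+1+1) = (2*(n+1)+1)+1 from by ring]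
    rw [List.replicate_succ, List.replicate_succ, List.flatten_cons, List.flatten_cons, ih]
    simp [List.replicate_succ, List.append_assoc]

/-- For `K, L ⊆ Σ*` and a fresh letter `c ∉ Σ`, the function
`f_{cKc}` is unbounded on `c(Lc)*` iff `K ∩ L ≠ ∅`. -/
theorem numF_cSepStar_unbounded_iff {α : Type} [Fintype α] (A : Set α) (c : α)
    (hc : c ∉ A) (K L : Set (List α))
    (hK : ∀ w ∈ K, ∀ x ∈ w, x ∈ A) (hL : ∀ w ∈ L, ∀ x ∈ w, x ∈ A) :
    (∀ k : ℕ, ∃ w ∈ cSepStar c L, k ≤ numF (cWrap c K) w) ↔ (K ∩ L).Nonempty := by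
  constructor
  · intro h
    by_contra hne
    rw [Set.not_nonempty_iff_eq_empty] at hne
    obtain ⟨w, hwL, h1⟩ := h 1
    obtain ⟨us, husL, rfl⟩ := hwL
    set w := c :: (us.map (fun u => u ++ [c])).flatten with hwdef
    have hzero : (0 : ℕ) ∈ {m | ∃ ws : Fin m → List α,
        (∀ i, ws i ∈ cWrap c K) ∧ ws ∈ FactorTuples m {w}} := by
      refine ⟨fun i => i.elim0, fun i => i.elim0, w, rfl, fun _ => w, ?_⟩
      simp [List.ofFn_zero]
    have hS : {m | ∃ ws : Fin m → List α,
        (∀ i, ws i ∈ cWrap c K) ∧ ws ∈ FactorTuples m {w}} = {0} := by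
      apply Set.eq_singleton_iff_unique_mem.mpr
      refine ⟨hzero, ?_⟩
      rintro m ⟨ws, hws, u, hu, g, hg⟩
      rw [Set.mem_singleton_iff] at hu
      subst hu
      cases m with
      | zero => rfl
      | succ m' =>
        exfalso
        obtain ⟨v, hvK, hws0⟩ := hws 0
        rw [List.ofFn_succ, List.flatten_cons, hws0] at hg
        have heq : w = g ((0 : Fin (m'+1)).castSucc) ++ c ::
              (v ++ c :: ((List.ofFn fun i : Fin m' =>
                g (i.succ).castSucc ++ ws i.succ).flatten ++ g (Fin.last (m'+1)))) := by
          rw [hg]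
          simp [List.append_assoc]
        have hvus : v ∈ us :=
          factor_in_sep c us (fun u hu hcu => hc (hL u (husL u hu) c hcu))
            v (fun hcv => hc (hK v hvK c hcv)) _ _ (hwdef.symm.trans heq)
        have hmem : v ∈ K ∩ L := ⟨hvK, husL v hvus⟩
        rw [hne] at hmem
        exact hmem
    rw [numF, hS, csSup_singleton] at h1
    omega
  · rintro ⟨v, hvK, hvL⟩ k
    cases k with
    | zero =>
      exact ⟨c :: ((List.map (fun u => u ++ [c]) ([] : List (List α))).flatten),
        ⟨[], by simp, rfl⟩, Nat.zero_le _⟩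
    | succ k' =>
      set B := v ++ [c] with hB
      set us := List.replicate (2*(k'+1)) v with husdef
      set w := c :: (us.map (fun u => u ++ [c])).flatten with hwdef
      refine ⟨w, ⟨us, fun u hu => (List.eq_of_mem_replicate hu) ▸ hvL, rfl⟩, ?_⟩
      rw [numF]
      have hbdd : BddAbove {m | ∃ ws : Fin m → List α,
          (∀ i, ws i ∈ cWrap c K) ∧ ws ∈ FactorTuples m {w}} := by
        refine ⟨w.length, ?_⟩
        rintro m ⟨ws, hws, u, hu, g, hg⟩
        rw [Set.mem_singleton_iff] at hu
        subst hu
        calc m = ∑ _i : Fin m, 1 := by simp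
          _ ≤ ∑ i : Fin m, (g i.castSucc ++ ws i).length := by
              refine Finset.sum_le_sum fun i _ => ?_
              obtain ⟨v', _, hv'⟩ := hws i
              rw [hv']
              simp
              omega
          _ = ((List.ofFn fun i : Fin m => g i.castSucc ++ ws i).flatten).length := by
              rw [List.length_flatten, List.map_ofFn, List.sum_ofFn]
              rfl
          _ ≤ w.length := by rw [hg]; simp
      apply le_csSup hbdd
      refine ⟨fun _ => c :: (v ++ [c]), fun i => ⟨v, hvK, rfl⟩, w, rfl,
        fun j : Fin (k'+2) => if (j : ℕ) = 0 then [] else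
          if (j : ℕ) = k'+1 then v ++ [c] else v, ?_⟩
      have hfun : (List.ofFn fun i : Fin (k'+1) =>
          (if (((i.castSucc : Fin (k'+2)) : ℕ)) = 0 then ([] : List α) else
            if ((i.castSucc : Fin (k'+2)) : ℕ) = k'+1 then v ++ [c] else v)
            ++ (c :: (v ++ [c])))
          = (c :: B) :: List.replicate k' (B ++ B) := by
        apply List.ext_getElem
        · simp
        · intro n h1 h2
          rw [List.getElem_ofFn]
          rcases n with _ | n
          · simp [hB]
          · rw [List.getElem_cons_succ, List.getElem_replicate]
            have hn : n + 1 < k' + 1 := by simpa using h1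
            have e1 : (((⟨n+1, hn⟩ : Fin (k'+1)).castSucc : Fin (k'+2)) : ℕ) = n+1 := rfl
            simp only [e1]
            rw [if_neg (Nat.succ_ne_zero n), if_neg (by omega)]
            simp [hB]
      rw [hfun]
      have hlast : (if ((Fin.last (k'+1) : Fin (k'+2)) : ℕ) = 0 then ([] : List α) else
          if ((Fin.last (k'+1) : Fin (k'+2)) : ℕ) = k'+1 then v ++ [c] else v)
          = v ++ [c] := by
        rw [Fin.val_last, if_neg (Nat.succ_ne_zero k'), if_pos rfl]
      simp only [hlast]
      rw [hwdef, husdef, List.map_replicate, ← hB, rep_helper B k']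
      simp [hB, List.append_assoc]
end

section
/- Let K, L1, L2 ⊆ Σ* be languages over a finite alphabet Σ. If K* ⊆ F(L1·L2) and K* ⊄ F(L1), then K* ⊆ F(L2). Symmetrically, if K* ⊆ F(L1·L2) and K* ⊄ F(L2), then K* ⊆ F(L1). -/
lemma split_cases {α : Type*} (u1 u2 x a b y : List α)
    (h : u1 ++ u2 = x ++ (a ++ b) ++ y) :
    (∃ x' y', u1 = x' ++ a ++ y') ∨ (∃ x' y', u2 = x' ++ b ++ y') := by
  have h' : u1 ++ u2 = (x ++ a) ++ (b ++ y) := by simp [h]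
  by_cases hle : (x ++ a).length ≤ u1.length
  · left
    have hp : (x ++ a) <+: u1 := by
      refine List.prefix_of_prefix_length_le ⟨b ++ y, h'.symm⟩ ⟨u2, rfl⟩ hle
    obtain ⟨t, ht⟩ := hp
    exact ⟨x, t, by simp [← ht]⟩
  · right
    push_neg at hle
    have : u2 = (x ++ a).drop u1.length ++ (b ++ y) := by
      have := congrArg (List.drop u1.length) h'
      rwa [List.drop_append_of_le_length hle.le, List.drop_left] at this
    exact ⟨(x ++ a).drop u1.length, y, by simp [this]⟩

lemma star_append {α : Type*} {K : Set (List α)} {w w' : List α}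
    (hw : w ∈ LangStar K) (hw' : w' ∈ LangStar K) : w ++ w' ∈ LangStar K := by
  obtain ⟨ws, h1, rfl⟩ := hw
  obtain ⟨ws', h1', rfl⟩ := hw'
  refine ⟨ws ++ ws', ?_, by simp⟩
  intro u hu
  rcases List.mem_append.1 hu with h | h
  exacts [h1 u h, h1' u h]

/-- If `K* ⊆ F(L1·L2)` and `K* ⊄ F(L1)` then `K* ⊆ F(L2)`;
symmetrically, if `K* ⊆ F(L1·L2)` and `K* ⊄ F(L2)` then `K* ⊆ F(L1)`. -/
theorem kstar_factors_conc {α : Type} [Fintype α] (K L1 L2 : Set (List α))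
    (h : LangStar K ⊆ Factors (LangConc L1 L2)) :
    (¬ LangStar K ⊆ Factors L1 → LangStar K ⊆ Factors L2) ∧
    (¬ LangStar K ⊆ Factors L2 → LangStar K ⊆ Factors L1) := by
  constructor
  · intro h1 w hw
    rw [Set.not_subset] at h1
    obtain ⟨w0, hw0, hw0n⟩ := h1
    have hm : w0 ++ w ∈ LangStar K := star_append hw0 hw
    obtain ⟨u, ⟨u1, hu1, u2, hu2, rfl⟩, x, y, hxy⟩ := h hm
    rcases split_cases u1 u2 x w0 w y hxy with ⟨x', y', he⟩ | ⟨x', y', he⟩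
    · exact absurd ⟨u1, hu1, x', y', he⟩ hw0n
    · exact ⟨u2, hu2, x', y', he⟩
  · intro h2 w hw
    rw [Set.not_subset] at h2
    obtain ⟨w0, hw0, hw0n⟩ := h2
    have hm : w ++ w0 ∈ LangStar K := star_append hw hw0
    obtain ⟨u, ⟨u1, hu1, u2, hu2, rfl⟩, x, y, hxy⟩ := h hm
    rcases split_cases u1 u2 x w w0 y hxy with ⟨x', y', he⟩ | ⟨x', y', he⟩
    · exact ⟨u1, hu1, x', y', he⟩
    · exact absurd ⟨u2, hu2, x', y', he⟩ hw0n
end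

section
/- Let K, L1, L2 ⊆ Σ* be languages over a finite alphabet Σ. If K* ⊆ F(L1 ∪ L2) and K* ⊄ F(L1), then K* ⊆ F(L2). -/
/-- If `K* ⊆ F(L1 ∪ L2)` and `K* ⊄ F(L1)` then `K* ⊆ F(L2)`. -/
theorem kstar_factors_union {α : Type} [Fintype α] (K L1 L2 : Set (List α))
    (h : LangStar K ⊆ Factors (L1 ∪ L2)) (h1 : ¬ LangStar K ⊆ Factors L1) :
    LangStar K ⊆ Factors L2 := by
  obtain ⟨w0, hw0, hw0n⟩ := Set.not_subset.mp h1
  intro w hw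
  obtain ⟨ws, hws, rfl⟩ := hw
  obtain ⟨ws0, hws0, rfl⟩ := hw0
  have hcat : (ws0 ++ ws).flatten ∈ LangStar K := by
    exact ⟨ws0 ++ ws, by intro u hu; rcases List.mem_append.mp hu with h'|h'
                         exacts [hws0 u h', hws u h'], rfl⟩
  obtain ⟨u, hu, x, y, hxy⟩ := h hcat
  rw [List.flatten_append] at hxy
  rcases hu with hu | hu
  · exact absurd ⟨u, hu, x, ws.flatten ++ y, by rw [hxy]; simp⟩ hw0n
  · exact ⟨u, hu, x ++ ws0.flatten, y, by rw [hxy]; simp⟩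
end

section
/- Let Σ be a finite alphabet, L ⊆ Σ*, and let c be a letter with c ∉ Σ. Let L' = c(Lc)* = {c u1 c u2 c ⋯ u_m c : m ≥ 0, u1,…,u_m ∈ L}, a language over Σ ∪ {c}. Then (Σ ∪ {c})* ⊆ F(L') if and only if L = Σ*. -/
/-!
As the blocks `uᵢ` of a word `c u₁ c ⋯ uₘ c` of `c(Lc)*` avoid `c`, the two letters `c` of a factor
`c w c` with `w ∈ Σ*` are consecutive separators, so `w` is one of the blocks and lies in `L`.
Conversely, cutting `w ∈ (Σ ∪ {c})*` at its letters `c` exhibits `c w c` as a word of `c(Σ*c)*`.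
-/

section DelimitedWords

variable {α : Type*} {c : α}

theorem append_cons_cancel_of_notMem {u v s t : List α} (hu : c ∉ u) (hv : c ∉ v)
    (h : u ++ c :: s = v ++ c :: t) : u = v ∧ s = t := by
  classical
  have hlen : u.length = v.length := by
    simpa [List.idxOf_append_of_notMem hu, List.idxOf_append_of_notMem hv]
      using congrArg (List.idxOf c) h
  simpa using List.append_inj h hlen

theorem mem_of_cons_flatten_map_append_singleton_eq {us : List (List α)} {w x y : List α}
    (hus : ∀ u ∈ us, c ∉ u) (hw : c ∉ w)
    (h : c :: (us.map (· ++ [c])).flatten = x ++ c :: (w ++ c :: y)) : w ∈ us := by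
  induction us generalizing x with
  | nil =>
    have := congrArg List.length h
    simp at this
    omega
  | cons u us ih =>
    have hu : c ∉ u := hus u List.mem_cons_self
    have hus' : ∀ v ∈ us, c ∉ v := fun v hv => hus v (List.mem_cons_of_mem u hv)
    rcases x with _ | ⟨a, x⟩
    · simp only [List.map_cons, List.flatten_cons, List.append_assoc, List.singleton_append,
        List.nil_append, List.cons.injEq, true_and] at h
      exact (append_cons_cancel_of_notMem hu hw h).1 ▸ List.mem_cons_self
    · simp only [List.map_cons, List.flatten_cons, List.append_assoc, List.cons_append,
        List.nil_append, List.cons.injEq] at h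
      rcases List.append_eq_append_iff.mp h.2 with ⟨x', rfl, h'⟩ | ⟨x', rfl, h'⟩
      · exact List.mem_cons_of_mem _ (ih hus' h')
      · rcases x' with _ | ⟨d, x'⟩
        · exact List.mem_cons_of_mem _ (ih (x := []) hus' (by simpa using h'.symm))
        · simp only [List.cons_append, List.cons.injEq] at h'
          exact absurd (h'.1 ▸ List.mem_append_right x List.mem_cons_self) hu

theorem mem_of_cons_append_singleton_mem_factors_cSepStar {L : Set (List α)} {w : List α}
    (hL : ∀ u ∈ L, c ∉ u) (hw : c ∉ w) (h : c :: (w ++ [c]) ∈ Factors (cSepStar c L)) :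
    w ∈ L := by
  obtain ⟨_, ⟨us, hus, rfl⟩, x, y, h⟩ := h
  refine hus w (mem_of_cons_flatten_map_append_singleton_eq (fun u hu => hL u (hus u hu)) hw
    (x := x) (y := y) ?_)
  simpa using h

theorem exists_append_singleton_eq_flatten_map_append_singleton (A : Set α) :
    ∀ w : List α, (∀ x ∈ w, x ∈ insert c A) →
      ∃ us : List (List α), (∀ u ∈ us, ∀ x ∈ u, x ∈ A) ∧
        w ++ [c] = (us.map (· ++ [c])).flatten
  | [], _ => ⟨[[]], by simp⟩
  | a :: w, hw => by
    obtain ⟨us, hus, heq⟩ := exists_append_singleton_eq_flatten_map_append_singleton A w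
      fun x hx => hw x (List.mem_cons_of_mem a hx)
    rcases hw a List.mem_cons_self with rfl | ha
    · exact ⟨[] :: us, by simpa using hus, by simpa using heq⟩
    · obtain _ | ⟨u, us⟩ := us
      · simp at heq
      · refine ⟨(a :: u) :: us, ?_, by simpa using heq⟩
        simp only [List.mem_cons, forall_eq_or_imp] at hus ⊢
        exact ⟨⟨ha, hus.1⟩, hus.2⟩

theorem mem_factors_cSepStar_of_forall_mem_insert {A : Set α} {w : List α}
    (hw : ∀ x ∈ w, x ∈ insert c A) : w ∈ Factors (cSepStar c {u | ∀ x ∈ u, x ∈ A}) := by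
  obtain ⟨us, hus, heq⟩ := exists_append_singleton_eq_flatten_map_append_singleton A w hw
  exact ⟨c :: (w ++ [c]), ⟨us, hus, by rw [heq]⟩, [c], [c], by simp⟩

end DelimitedWords

theorem factor_universal_cSepStar_iff_general {α : Type} (A : Set α) (c : α)
    (hc : c ∉ A) (L : Set (List α)) (hL : ∀ w ∈ L, ∀ x ∈ w, x ∈ A) :
    {w : List α | ∀ x ∈ w, x ∈ insert c A} ⊆ Factors (cSepStar c L) ↔
      L = {w : List α | ∀ x ∈ w, x ∈ A} := by
  constructor
  · intro h
    ext w
    refine ⟨hL w, fun hw => mem_of_cons_append_singleton_mem_factors_cSepStar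
      (fun u hu hcu => hc (hL u hu c hcu)) (fun hcw => hc (hw c hcw)) (h ?_)⟩
    intro x hx
    simp only [List.mem_cons, List.mem_append, List.not_mem_nil, or_false] at hx
    rcases hx with rfl | hx | rfl
    exacts [Set.mem_insert x A, Set.mem_insert_of_mem c (hw x hx), Set.mem_insert x A]
  · rintro rfl w hw
    exact mem_factors_cSepStar_of_forall_mem_insert hw

/-- For `L ⊆ Σ*` and a fresh letter `c ∉ Σ`, with `L' = c(Lc)*`,
we have `(Σ ∪ {c})* ⊆ F(L')` iff `L = Σ*`. -/
theorem factor_universal_cSepStar_iff {α : Type} [Fintype α] (A : Set α) (c : α)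
    (hc : c ∉ A) (L : Set (List α)) (hL : ∀ w ∈ L, ∀ x ∈ w, x ∈ A) :
    {w : List α | ∀ x ∈ w, x ∈ insert c A} ⊆ Factors (cSepStar c L) ↔
      L = {w : List α | ∀ x ∈ w, x ∈ A} :=
  factor_universal_cSepStar_iff_general A c hc L hL
end

section
/- Let C be a precovering graph for a Petri net N = (P, T, Pre, Post) with distinguished vector m and initial vector m^init, and suppose s ∈ L(C) ∩ L(N, m^init) is a covering sequence for C. Then for every v ∈ L(C) there exists u ∈ T* such that uv is a covering sequence for C. -/
/-- The effect `Δ(t) = Post(t) − Pre(t)` of a transition at a place. -/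
def PetriDelta {P T : Type*} (Pre Post : T → P → ℕ) (t : T) (p : P) : ℤ :=
  (Post t p : ℤ) - (Pre t p : ℤ)

/-- The effect `Δ(w)` of a transition sequence at a place. -/
def PetriDeltaW {P T : Type*} (Pre Post : T → P → ℕ) (w : List T) (p : P) : ℤ :=
  (w.map fun t => PetriDelta Pre Post t p).sum

/-- Firing a transition in an extended (`ℕ ∪ {ω}`-valued) marking, with
`ω − k = ω = ω + k`. -/
def PetriFire {P T : Type*} (Pre Post : T → P → ℕ) (t : T) (M : P → ℕ∞) :
    P → ℕ∞ :=
  fun p => M p - (Pre t p : ℕ∞) + (Post t p : ℕ∞)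

/-- `PetriFireable Pre Post M w` : the transition sequence `w` is fireable from the
extended marking `M`; thus `L(N, M) = {w | PetriFireable Pre Post M w}`. -/
def PetriFireable {P T : Type*} (Pre Post : T → P → ℕ) :
    (P → ℕ∞) → List T → Prop
  | _, [] => True
  | M, t :: ts => (∀ p, (Pre t p : ℕ∞) ≤ M p) ∧
      PetriFireable Pre Post (PetriFire Pre Post t M) ts

/-- `u ≤_ω v` : for every place `p`, `u p = v p` or `v p = ω`. -/
def leOmega {P : Type*} (u v : P → ℕ∞) : Prop := ∀ p, u p = v p ∨ v p = ⊤

/-- A precovering graph for the Petri net `(P, T, Pre, Post)`: a finite strongly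
connected directed graph with vertices in `(ℕ ∪ {ω})^P`, edges labeled by
transitions, a distinguished vertex `m` and an initial vector `minit ≤_ω m`, such
that for every edge `(m1, m2)` labeled `t`, `t` is fireable in `m1` and the result
of firing it is `≤_ω m2`. -/
structure Precover (P T : Type*) (Pre Post : T → P → ℕ) where
  V : Set (P → ℕ∞)
  finV : V.Finite
  E : Set ((P → ℕ∞) × (P → ℕ∞))
  lab : (P → ℕ∞) × (P → ℕ∞) → T
  m : P → ℕ∞
  minit : P → ℕ∞
  edges_mem : ∀ e ∈ E, e.1 ∈ V ∧ e.2 ∈ V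
  m_mem : m ∈ V
  strongly_connected : ∀ u ∈ V, ∀ v ∈ V,
    Relation.ReflTransGen (fun a b => (a, b) ∈ E) u v
  edge_fire : ∀ e ∈ E, (∀ p, (Pre (lab e) p : ℕ∞) ≤ e.1 p) ∧
    leOmega (PetriFire Pre Post (lab e) e.1) e.2
  init_le : leOmega minit m

/-- `PrecoverReads E lab u w v` : the word `w ∈ T*` is read along a path from `u`
to `v` in the labeled graph `(E, lab)`. -/
def PrecoverReads {P T : Type*} (E : Set ((P → ℕ∞) × (P → ℕ∞)))
    (lab : (P → ℕ∞) × (P → ℕ∞) → T) :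
    (P → ℕ∞) → List T → (P → ℕ∞) → Prop
  | u, [], v => u = v
  | u, t :: w, v => ∃ z, (u, z) ∈ E ∧ lab (u, z) = t ∧ PrecoverReads E lab z w v

/-- `L(C)`: the words read along closed paths from `m` back to `m`. -/
def Precover.lang {P T : Type*} {Pre Post : T → P → ℕ}
    (C : Precover P T Pre Post) : Set (List T) :=
  {w | PrecoverReads C.E C.lab C.m w C.m}

/-- `u` is a covering sequence for `C`: `u ∈ L(C) ∩ L(N, m^init)` and for every
place `p`, either `m^init[p] = ω`, or `m[p] = m^init[p]` and `Δ(u)[p] = 0`, or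
`m[p] = ω` and `Δ(u)[p] > 0`. -/
def IsCoveringSeq {P T : Type*} (Pre Post : T → P → ℕ)
    (C : Precover P T Pre Post) (u : List T) : Prop :=
  u ∈ C.lang ∧ PetriFireable Pre Post C.minit u ∧
  ∀ p : P, C.minit p = ⊤ ∨
    (C.m p = C.minit p ∧ PetriDeltaW Pre Post u p = 0) ∨
    (C.m p = ⊤ ∧ 0 < PetriDeltaW Pre Post u p)

/-!
Pump the covering sequence: take `u = s^k` for `k` larger than the number of tokens `v`
consumes at any place. Since `Δ(s) ≥ 0` wherever `m^init` is finite, `s^k` is fireable from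
`m^init`, and afterwards the marking agrees with `m` on the finite places of `m` and holds at
least `k` tokens on the others, which is enough to fire `v`. On a finite place of `m` the closed
path `v` has effect `0`; on a place where `Δ(s) > 0`, the gain `k · Δ(s) ≥ k` outweighs the
loss caused by `v`.
-/

section PetriNet

variable {P T : Type*}

def PetriFireW (Pre Post : T → P → ℕ) : (P → ℕ∞) → List T → P → ℕ∞
  | M, [] => M
  | M, t :: w => PetriFireW Pre Post (PetriFire Pre Post t M) w

def PetriPreW (Pre : T → P → ℕ) (w : List T) (p : P) : ℕ :=
  (w.map fun t => Pre t p).sum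

variable {Pre Post : T → P → ℕ} {M M' : P → ℕ∞} {t : T} {w w₁ w₂ : List T} {p : P}

lemma petriFire_mono (h : M ≤ M') : PetriFire Pre Post t M ≤ PetriFire Pre Post t M' :=
  fun p => add_le_add_left (tsub_le_tsub_right (h p) _) _

lemma petriFireW_eq_top (h : M p = ⊤) : PetriFireW Pre Post M w p = ⊤ := by
  induction w generalizing M with
  | nil => exact h
  | cons t w ih => exact ih (by simp [PetriFire, h])

@[simp] lemma petriDeltaW_cons :
    PetriDeltaW Pre Post (t :: w) p = PetriDelta Pre Post t p + PetriDeltaW Pre Post w p := by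
  simp [PetriDeltaW]

@[simp] lemma petriDeltaW_append :
    PetriDeltaW Pre Post (w₁ ++ w₂) p =
      PetriDeltaW Pre Post w₁ p + PetriDeltaW Pre Post w₂ p := by
  simp [PetriDeltaW]

@[simp] lemma petriDeltaW_flatten_replicate (k : ℕ) :
    PetriDeltaW Pre Post (List.replicate k w).flatten p = k * PetriDeltaW Pre Post w p := by
  induction k with
  | zero => simp [PetriDeltaW]
  | succ k ih =>
    rw [List.replicate_succ, List.flatten_cons, petriDeltaW_append, ih]
    push_cast
    ring

@[simp] lemma petriPreW_cons : PetriPreW Pre (t :: w) p = Pre t p + PetriPreW Pre w p := by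
  simp [PetriPreW]

lemma neg_petriPreW_le_petriDeltaW : -(PetriPreW Pre w p : ℤ) ≤ PetriDeltaW Pre Post w p := by
  induction w with
  | nil => simp [PetriPreW, PetriDeltaW]
  | cons t w ih =>
    simp only [petriPreW_cons, petriDeltaW_cons, PetriDelta]
    push_cast
    omega

namespace PetriFireable

lemma append (h₁ : PetriFireable Pre Post M w₁)
    (h₂ : PetriFireable Pre Post (PetriFireW Pre Post M w₁) w₂) :
    PetriFireable Pre Post M (w₁ ++ w₂) := by
  induction w₁ generalizing M with
  | nil => exact h₂
  | cons t w ih => exact ⟨h₁.1, ih h₁.2 h₂⟩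

lemma mono (h : M ≤ M') (hw : PetriFireable Pre Post M w) : PetriFireable Pre Post M' w := by
  induction w generalizing M M' with
  | nil => trivial
  | cons t w ih => exact ⟨fun p => (hw.1 p).trans (h p), ih (petriFire_mono h) hw.2⟩

/-- Along a fireable word no subtraction is truncated, so finite places change by `Δ(w)`. -/
lemma petriFireW_eq_coe (hw : PetriFireable Pre Post M w) {n : ℕ} (h : M p = n) :
    ∃ k : ℕ, PetriFireW Pre Post M w p = k ∧ (k : ℤ) = n + PetriDeltaW Pre Post w p := by
  induction w generalizing M n with
  | nil => exact ⟨n, h, by simp [PetriDeltaW]⟩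
  | cons t w ih =>
    have hpre : Pre t p ≤ n := by exact_mod_cast h ▸ hw.1 p
    obtain ⟨k, hk, hkn⟩ := ih hw.2 (n := n - Pre t p + Post t p) (by simp [PetriFire, h])
    refine ⟨k, hk, ?_⟩
    rw [hkn, petriDeltaW_cons, PetriDelta]
    push_cast [Nat.cast_sub hpre]
    ring

lemma le_petriFireW (hw : PetriFireable Pre Post M w)
    (hΔ : ∀ p, M p ≠ ⊤ → 0 ≤ PetriDeltaW Pre Post w p) :
    M ≤ PetriFireW Pre Post M w := by
  intro p
  by_cases hp : M p = ⊤
  · simp [petriFireW_eq_top hp]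
  obtain ⟨n, hn⟩ := ENat.ne_top_iff_exists.mp hp
  obtain ⟨k, hk, hkn⟩ := hw.petriFireW_eq_coe hn.symm
  have hΔp := hΔ p hp
  rw [← hn, hk]
  exact Nat.cast_le.mpr (by omega)

lemma flatten_replicate (hw : PetriFireable Pre Post M w) (hle : M ≤ PetriFireW Pre Post M w)
    (k : ℕ) : PetriFireable Pre Post M (List.replicate k w).flatten := by
  induction k with
  | zero => trivial
  | succ k ih =>
    rw [List.replicate_succ, List.flatten_cons]
    exact hw.append (ih.mono hle)

end PetriFireable

namespace leOmega

variable {u v x : P → ℕ∞}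

lemma trans (h₁ : leOmega u v) (h₂ : leOmega v x) : leOmega u x := fun p => by
  rcases h₂ p with h | h
  · exact (h₁ p).imp (·.trans h) (h ▸ ·)
  · exact .inr h

lemma petriFireW (h : leOmega u v) :
    leOmega (PetriFireW Pre Post u w) (PetriFireW Pre Post v w) := by
  induction w generalizing u v with
  | nil => exact h
  | cons t w ih =>
    exact ih fun p =>
      (h p).imp (fun hp => by simp [PetriFire, hp]) (fun hp => by simp [PetriFire, hp])

end leOmega

end PetriNet

section PrecoveringGraph

variable {P T : Type*} {Pre Post : T → P → ℕ} {w w₁ w₂ : List T} {p : P}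

lemma PrecoverReads.append {E : Set ((P → ℕ∞) × (P → ℕ∞))}
    {lab : (P → ℕ∞) × (P → ℕ∞) → T} {a b c : P → ℕ∞}
    (h₁ : PrecoverReads E lab a w₁ b) (h₂ : PrecoverReads E lab b w₂ c) :
    PrecoverReads E lab a (w₁ ++ w₂) c := by
  induction w₁ generalizing a with
  | nil => exact (show a = b from h₁) ▸ h₂
  | cons t w ih =>
    obtain ⟨z, hz, hlab, hr⟩ := h₁
    exact ⟨z, hz, hlab, ih hr⟩

namespace Precover

variable (C : Precover P T Pre Post)

def IsCoveringAt (u : List T) (p : P) : Prop :=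
  C.minit p = ⊤ ∨ (C.m p = C.minit p ∧ PetriDeltaW Pre Post u p = 0) ∨
    (C.m p = ⊤ ∧ 0 < PetriDeltaW Pre Post u p)

lemma append_mem_lang (h₁ : w₁ ∈ C.lang) (h₂ : w₂ ∈ C.lang) : w₁ ++ w₂ ∈ C.lang :=
  PrecoverReads.append h₁ h₂

lemma flatten_replicate_mem_lang (h : w ∈ C.lang) (k : ℕ) :
    (List.replicate k w).flatten ∈ C.lang := by
  induction k with
  | zero => rfl
  | succ k ih =>
    rw [List.replicate_succ, List.flatten_cons]
    exact C.append_mem_lang h ih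

lemma leOmega_petriFireW_of_reads {z y : P → ℕ∞} (h : PrecoverReads C.E C.lab z w y) :
    leOmega (PetriFireW Pre Post z w) y := by
  induction w generalizing z with
  | nil => exact fun p => .inl (congrFun h p)
  | cons t w ih =>
    obtain ⟨z', hz', rfl, hr⟩ := h
    exact (C.edge_fire _ hz').2.petriFireW.trans (ih hr)

lemma eq_top_of_reads {z y : P → ℕ∞} (h : PrecoverReads C.E C.lab z w y) (hz : z p = ⊤) :
    y p = ⊤ :=
  (C.leOmega_petriFireW_of_reads h p).elim (fun hy => hy.symm.trans (petriFireW_eq_top hz)) id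

/-- Paths need not be fireable from their source: a vertex may carry `ω` where firing only
produced a finite value. They are fireable once the `ω`-places of the target are backed by enough
tokens. -/
lemma fireable_of_reads {z y N : P → ℕ∞} (h : PrecoverReads C.E C.lab z w y)
    (hN : ∀ p, (y p ≠ ⊤ ∧ N p = z p) ∨ (PetriPreW Pre w p : ℕ∞) ≤ N p) :
    PetriFireable Pre Post N w := by
  induction w generalizing z N with
  | nil => trivial
  | cons t w ih =>
    obtain ⟨z', hz', rfl, hr⟩ := h
    obtain ⟨hpre, hfire⟩ := C.edge_fire _ hz'
    refine ⟨fun p => ?_, ih hr fun p => ?_⟩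
    · rcases hN p with ⟨-, hp⟩ | hp
      · exact hp ▸ hpre p
      · exact le_trans (by simp) hp
    · rcases hN p with ⟨hy, hp⟩ | hp
      · have hz'p : z' p ≠ ⊤ := fun hz => hy (C.eq_top_of_reads hr hz)
        have hNz : PetriFire Pre Post (C.lab (z, z')) N p =
            PetriFire Pre Post (C.lab (z, z')) z p := by
          simp [PetriFire, hp]
        exact .inl ⟨hy, hNz.trans ((hfire p).resolve_right hz'p)⟩
      · refine .inr (le_trans ?_ le_self_add)
        exact ENat.le_sub_of_add_le_left (ENat.natCast_ne_top _) (by simpa using hp)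

lemma petriDeltaW_eq_zero_of_mem_lang (h : w ∈ C.lang) (hp : C.m p ≠ ⊤) :
    PetriDeltaW Pre Post w p = 0 := by
  have hw : PetriFireable Pre Post C.m w := C.fireable_of_reads h fun p =>
    if hp : C.m p = ⊤ then .inr (hp ▸ le_top) else .inl ⟨hp, rfl⟩
  obtain ⟨n, hn⟩ := ENat.ne_top_iff_exists.mp hp
  obtain ⟨k, hk, hkn⟩ := hw.petriFireW_eq_coe hn.symm
  have hkn' : k = n := by
    rcases C.leOmega_petriFireW_of_reads h p with h | h
    · exact_mod_cast hk.symm.trans (h.trans hn.symm)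
    · exact absurd h hp
  omega

namespace IsCoveringAt

variable {C} {s v : List T} {k : ℕ}

lemma petriDeltaW_nonneg (h : C.IsCoveringAt s p) (hp : C.minit p ≠ ⊤) :
    0 ≤ PetriDeltaW Pre Post s p := by
  rcases h with h | ⟨-, h⟩ | ⟨-, h⟩
  · exact absurd h hp
  · exact h.ge
  · exact h.le

lemma petriFireW_eq_or_le (h : C.IsCoveringAt s p)
    (hfire : PetriFireable Pre Post C.minit (List.replicate k s).flatten) :
    (C.m p ≠ ⊤ ∧ PetriFireW Pre Post C.minit (List.replicate k s).flatten p = C.m p) ∨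
      (k : ℕ∞) ≤ PetriFireW Pre Post C.minit (List.replicate k s).flatten p := by
  by_cases hinit : C.minit p = ⊤
  · exact .inr (petriFireW_eq_top hinit ▸ le_top)
  obtain ⟨n, hn⟩ := ENat.ne_top_iff_exists.mp hinit
  obtain ⟨k', hk', hkn⟩ := hfire.petriFireW_eq_coe hn.symm
  rw [petriDeltaW_flatten_replicate] at hkn
  rw [hk']
  rcases h with h | ⟨hm, hΔ⟩ | ⟨-, hΔ⟩
  · exact absurd h hinit
  · refine .inl ⟨hm ▸ hinit, ?_⟩
    rw [hm, ← hn]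
    rw [hΔ, mul_zero, add_zero] at hkn
    exact_mod_cast hkn
  · right
    have : (k : ℤ) ≤ k * PetriDeltaW Pre Post s p := le_mul_of_one_le_right (by positivity) hΔ
    exact Nat.cast_le.mpr (by omega)

lemma flatten_replicate_append (h : C.IsCoveringAt s p) (hv : v ∈ C.lang)
    (hk : PetriPreW Pre v p < k) : C.IsCoveringAt ((List.replicate k s).flatten ++ v) p := by
  rcases h with h | ⟨hm, hΔ⟩ | ⟨hm, hΔ⟩
  · exact .inl h
  · by_cases hinit : C.minit p = ⊤
    · exact .inl hinit
    refine .inr (.inl ⟨hm, ?_⟩)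
    simp [hΔ, C.petriDeltaW_eq_zero_of_mem_lang hv (hm ▸ hinit)]
  · refine .inr (.inr ⟨hm, ?_⟩)
    have hv := neg_petriPreW_le_petriDeltaW (Pre := Pre) (Post := Post) (w := v) (p := p)
    have hs : (k : ℤ) ≤ k * PetriDeltaW Pre Post s p :=
      le_mul_of_one_le_right (by positivity) hΔ
    simp only [petriDeltaW_append, petriDeltaW_flatten_replicate]
    omega

end IsCoveringAt

end Precover

end PrecoveringGraph

theorem covering_sequence_with_suffix_general {P T : Type*} [Fintype P]
    (Pre Post : T → P → ℕ) (C : Precover P T Pre Post) (s : List T)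
    (hs : IsCoveringSeq Pre Post C s) :
    ∀ v ∈ C.lang, ∃ u : List T, IsCoveringSeq Pre Post C (u ++ v) := by
  obtain ⟨hslang, hsfire, hscov⟩ := hs
  have hscov : ∀ p, C.IsCoveringAt s p := hscov
  intro v hv
  set k := ∑ p, PetriPreW Pre v p + 1
  have hk : ∀ p, PetriPreW Pre v p < k := fun p =>
    Nat.lt_succ_of_le (Finset.single_le_sum (fun _ _ => Nat.zero_le _) (Finset.mem_univ p))
  have hufire : PetriFireable Pre Post C.minit (List.replicate k s).flatten :=
    hsfire.flatten_replicate (hsfire.le_petriFireW fun p => (hscov p).petriDeltaW_nonneg) k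
  have hvfire :
      PetriFireable Pre Post (PetriFireW Pre Post C.minit (List.replicate k s).flatten) v :=
    C.fireable_of_reads hv fun p =>
      ((hscov p).petriFireW_eq_or_le hufire).imp_right (Nat.cast_le.mpr (hk p).le).trans
  exact ⟨_, C.append_mem_lang (C.flatten_replicate_mem_lang hslang k) hv, hufire.append hvfire,
    fun p => (hscov p).flatten_replicate_append hv (hk p)⟩

/-- If a precovering graph `C` admits a covering sequence `s`, then
for every `v ∈ L(C)` there is `u ∈ T*` such that `u ++ v` is a covering sequence
for `C`. -/
theorem covering_sequence_with_suffix {P T : Type*} [Fintype P] [Fintype T]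
    (Pre Post : T → P → ℕ) (C : Precover P T Pre Post) (s : List T)
    (hs : IsCoveringSeq Pre Post C s) :
    ∀ v ∈ C.lang, ∃ u : List T, IsCoveringSeq Pre Post C (u ++ v) :=
  covering_sequence_with_suffix_general Pre Post C s hs
end
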